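/- arXiv:2011.07352 — 11 statements merged into one kernel-verified Lean document; each statement's English description precedes it below -/
import Mathlib

section
/- There exist a function η : ℕ → ℕ and a map Φ from P to {f : ℕ → ℕ | f(k) < η(k) for all k} such that for all f and g in P, if f ≤* g and g ≰* f then Φ(f) <* Φ(g). -/
open Filter

/-- `P` is the set of `f : ℕ → ℕ` with `f 0 = 0` and `f k < k` for all `k ≥ 1`
(the set denoted `∏_k k` in the paper). -/
def MemP (f : ℕ → ℕ) : Prop := f 0 = 0 ∧ ∀ k, 1 ≤ k → f k < k

/-- `f ≤* g`: `f j ≤ g j` for all but finitely many `j`. -/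
def LeStar (f g : ℕ → ℕ) : Prop := ∀ᶠ j in atTop, f j ≤ g j

/-- `f <* g`: `f j < g j` for all but finitely many `j`. -/
def LtStar (f g : ℕ → ℕ) : Prop := ∀ᶠ j in atTop, f j < g j

/-!
Take `Φ f k = ∑_{j<k} f j`, bounded by `η k = 1 + ∑_{j<k} j` on `P`. If `f ≤* g` and `g ≰* f`,
the differences `g j - f j` are eventually nonnegative and infinitely often positive, so the
partial sums of `g - f` tend to infinity; in particular `Φ f <* Φ g`.
-/

open Finset

theorem tendsto_sum_range_atTop_of_eventually_nonneg {a : ℕ → ℤ}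
    (hnonneg : ∀ᶠ j in atTop, 0 ≤ a j) (hpos : ∃ᶠ j in atTop, 0 < a j) :
    Tendsto (fun k => ∑ j ∈ range k, a j) atTop atTop := by
  obtain ⟨N, hN⟩ := eventually_atTop.mp hnonneg
  set S : ℕ → ℤ := fun k => ∑ j ∈ range k, a j
  have hmono : MonotoneOn S (Set.Ici N) :=
    monotoneOn_of_le_add_one Set.ordConnected_Ici fun j _ hj _ => by
      simpa [S, sum_range_succ] using hN j hj
  have hgrow : ∀ m : ℕ, ∀ᶠ k in atTop, S N + m ≤ S k := by
    intro m
    induction m with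
    | zero =>
      exact eventually_atTop.mpr ⟨N, fun k hk => by simpa using hmono Set.self_mem_Ici hk hk⟩
    | succ m ih =>
      obtain ⟨K, hK⟩ := eventually_atTop.mp ih
      obtain ⟨j, hj, hj_pos⟩ := frequently_atTop.mp hpos (max N K)
      have hNj : N ≤ j := le_of_max_le_left hj
      have hSj := hK j (le_of_max_le_right hj)
      have hstep : S (j + 1) = S j + a j := sum_range_succ a j
      refine eventually_atTop.mpr ⟨j + 1, fun k hk => ?_⟩
      have hSk : S (j + 1) ≤ S k := hmono (Set.mem_Ici.mpr (by omega))
        (Set.mem_Ici.mpr (by omega)) hk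
      push_cast
      omega
  refine tendsto_atTop.mpr fun b => ?_
  filter_upwards [hgrow (b - S N).toNat] with k hk
  omega

theorem eventually_sum_range_lt_of_leStar {f g : ℕ → ℕ} (hle : LeStar f g)
    (hnot : ¬ LeStar g f) : ∀ᶠ k in atTop, ∑ j ∈ range k, f j < ∑ j ∈ range k, g j := by
  have hnonneg : ∀ᶠ j in atTop, (0 : ℤ) ≤ (g j : ℤ) - f j :=
    hle.mono fun j hj => by omega
  have hpos : ∃ᶠ j in atTop, (0 : ℤ) < (g j : ℤ) - f j :=
    (not_eventually.mp hnot).mono fun j hj => by omega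
  have htendsto := tendsto_sum_range_atTop_of_eventually_nonneg hnonneg hpos
  filter_upwards [htendsto.eventually_ge_atTop 1] with k hk
  rw [sum_sub_distrib] at hk
  exact_mod_cast (show (∑ j ∈ range k, (f j : ℤ)) < ∑ j ∈ range k, (g j : ℤ) by omega)

theorem MemP.apply_le {f : ℕ → ℕ} (hf : MemP f) (j : ℕ) : f j ≤ j := by
  rcases Nat.eq_zero_or_pos j with rfl | hj
  · exact hf.1.le
  · exact (hf.2 j hj).le

/-- There exist `η : ℕ → ℕ` and `Φ` from `P` to `{f | ∀ k, f k < η k}` such that for all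
`f, g ∈ P`, if `f ≤* g` and `g ≰* f` then `Φ f <* Φ g`. -/
theorem stmt0 :
    ∃ (η : ℕ → ℕ) (Φ : (ℕ → ℕ) → (ℕ → ℕ)),
      (∀ f, MemP f → ∀ k, Φ f k < η k) ∧
      (∀ f g, MemP f → MemP g → LeStar f g → ¬ LeStar g f → LtStar (Φ f) (Φ g)) := by
  refine ⟨fun k => ∑ j ∈ range k, j + 1, fun f k => ∑ j ∈ range k, f j, ?_, ?_⟩
  · intro f hf k
    exact Nat.lt_succ_of_le (sum_le_sum fun j _ => hf.apply_le j)
  · exact fun f g _ _ hle hnot => eventually_sum_range_lt_of_leStar hle hnot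
end

section
/- There exists a binary relation ≺ on ℕ which is asymmetric (m ≺ n implies ¬(n ≺ m)) and has the following extension property: for all pairwise disjoint finite sets F, G, H ⊆ ℕ there exists n ∈ ℕ \ (F ∪ G ∪ H) such that m ≺ n for all m ∈ F, n ≺ m for all m ∈ G, and for every m ∈ H neither m ≺ n nor n ≺ m. -/
/-!
Read `m ≺ n` for `m < n` off the `m`-th ternary digit of `n`: digit `1` means `m ≺ n`,
digit `2` means `n ≺ m`, digit `0` means unrelated. Since every pair is decided by a single
digit of the larger number, `≺` is asymmetric. Given `F, G, H` below `N`, choose the `m`-th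
digit of `n` to be `1`, `2` or `0` according as `m ∈ F`, `G` or `H`, and put a leading digit
`1` at position `N`; then `n ≥ 3 ^ N > N` lies outside `F ∪ G ∪ H` and has the required relations.
-/

namespace Nat

theorem exists_gt_div_pow_mod_eq {b : ℕ} (hb : 2 ≤ b) (N : ℕ) (c : ℕ → ℕ) (hc : ∀ k, c k < b) :
    ∃ n, N < n ∧ ∀ k < N, n / b ^ k % b = c k := by
  set L := (List.range N).map c ++ [1]
  have hdigits : b.digits (ofDigits b L) = L := by
    refine digits_ofDigits b hb L (fun l hl => ?_) (fun _ => by simp [L])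
    rcases List.mem_append.1 hl with hl | hl
    · obtain ⟨k, -, rfl⟩ := List.mem_map.1 hl
      exact hc k
    · rw [List.mem_singleton.1 hl]
      omega
  refine ⟨ofDigits b L, ?_, fun k hk => ?_⟩
  · calc N < b ^ N := Nat.lt_pow_self hb
      _ ≤ ofDigits b L := by simp [L, ofDigits_append, ofDigits]
  · have hk' : k < ((List.range N).map c).length := by simpa using hk
    rw [← getD_digits _ _ hb, hdigits, List.getD_append _ _ _ _ hk',
      List.getD_eq_getElem _ _ hk']
    simp

end Nat

def ternaryRel (m n : ℕ) : Prop :=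
  (m < n ∧ n / 3 ^ m % 3 = 1) ∨ (n < m ∧ m / 3 ^ n % 3 = 2)

theorem ternaryRel_asymm {m n : ℕ} (h : ternaryRel m n) : ¬ ternaryRel n m := by
  unfold ternaryRel at *
  omega

theorem ternaryRel_iff_of_lt {m n : ℕ} (h : m < n) : ternaryRel m n ↔ n / 3 ^ m % 3 = 1 := by
  unfold ternaryRel
  constructor
  · rintro (⟨-, hd⟩ | ⟨hnm, -⟩)
    exacts [hd, absurd h (Nat.lt_asymm hnm)]
  · exact fun hd => Or.inl ⟨h, hd⟩

theorem ternaryRel_iff_of_gt {m n : ℕ} (h : n < m) : ternaryRel m n ↔ m / 3 ^ n % 3 = 2 := by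
  unfold ternaryRel
  constructor
  · rintro (⟨hmn, -⟩ | ⟨-, hd⟩)
    exacts [absurd h (Nat.lt_asymm hmn), hd]
  · exact fun hd => Or.inr ⟨h, hd⟩

/-- There exists an asymmetric binary relation `≺` on `ℕ` with the extension property:
for all pairwise disjoint finite `F, G, H ⊆ ℕ` there is `n ∉ F ∪ G ∪ H` with `m ≺ n` for
`m ∈ F`, `n ≺ m` for `m ∈ G`, and `n` unrelated to every `m ∈ H`. -/
theorem stmt1 :
    ∃ r : ℕ → ℕ → Prop,
      (∀ m n, r m n → ¬ r n m) ∧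
      (∀ F G H : Finset ℕ, Disjoint F G → Disjoint F H → Disjoint G H →
        ∃ n : ℕ, n ∉ F ∪ G ∪ H ∧ (∀ m ∈ F, r m n) ∧ (∀ m ∈ G, r n m) ∧
          (∀ m ∈ H, ¬ r m n ∧ ¬ r n m)) := by
  refine ⟨ternaryRel, fun _ _ => ternaryRel_asymm, fun F G H hFG hFH hGH => ?_⟩
  obtain ⟨N, hN⟩ : ∃ N, ∀ m ∈ F ∪ G ∪ H, m < N :=
    ⟨(F ∪ G ∪ H).sup id + 1, fun m hm => Nat.lt_succ_of_le (Finset.le_sup (f := id) hm)⟩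
  obtain ⟨n, hNn, hdigit⟩ := Nat.exists_gt_div_pow_mod_eq (b := 3) (by norm_num) N
    (fun m => if m ∈ F then 1 else if m ∈ G then 2 else 0) (fun m => by split_ifs <;> omega)
  have hlt : ∀ m ∈ F ∪ G ∪ H, m < n := fun m hm => (hN m hm).trans hNn
  have hdigit' : ∀ m ∈ F ∪ G ∪ H,
      n / 3 ^ m % 3 = if m ∈ F then 1 else if m ∈ G then 2 else 0 :=
    fun m hm => hdigit m (hN m hm)
  refine ⟨n, fun hn => lt_irrefl n (hlt n hn), fun m hm => ?_, fun m hm => ?_, fun m hm => ?_⟩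
  · have hS : m ∈ F ∪ G ∪ H := by simp [hm]
    rw [ternaryRel_iff_of_lt (hlt m hS), hdigit' m hS, if_pos hm]
  · have hS : m ∈ F ∪ G ∪ H := by simp [hm]
    rw [ternaryRel_iff_of_gt (hlt m hS), hdigit' m hS, if_neg (Finset.disjoint_right.1 hFG hm),
      if_pos hm]
  · have hS : m ∈ F ∪ G ∪ H := by simp [hm]
    rw [ternaryRel_iff_of_lt (hlt m hS), ternaryRel_iff_of_gt (hlt m hS), hdigit' m hS,
      if_neg (Finset.disjoint_right.1 hFH hm), if_neg (Finset.disjoint_right.1 hGH hm)]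
    omega
end

section
/- Let I be a finite linearly ordered set with |I| ≥ 2, let A and F(ξ), for ξ ∈ I, be pairwise disjoint sets, and let ≤ be a partial order on a set including E := A ∪ ⋃_{ξ∈I} F(ξ). Then the depletion ≪_I of ≤ given by these parameters is a partial order on E (reflexive, antisymmetric, and transitive) whose graph is included in the graph of ≤. -/
variable {α ι : Type*}

/-- `ζ` and `ζ'` are consecutive in the finite index set `s`:
`ζ < ζ'` and no element of `s` lies strictly between them. -/
def ConsecIn [LinearOrder ι] (s : Finset ι) (ζ ζ' : ι) : Prop :=
  ζ < ζ' ∧ ∀ η ∈ s, ¬(ζ < η ∧ η < ζ')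

/-- The depletion `≪_s` of the partial order `≤` of `α` given by the finite linearly
ordered index set `s`, the set `A`, and the family `(F ξ)_{ξ ∈ s}`. -/
def Depl [PartialOrder α] [LinearOrder ι] (A : Set α) (F : ι → Set α)
    (s : Finset ι) (x y : α) : Prop :=
  x ≤ y ∧
  ((∃ ξ ∈ s, x ∈ A ∪ F ξ ∧ y ∈ A ∪ F ξ) ∨
   (∃ i ∈ s, ∃ j ∈ s, i < j ∧ x ∈ F i ∧ y ∈ F j ∧
     ((∃ a ∈ A, x ≤ a ∧ a ≤ y) ∨
      (∃ w : ι → α, w i = x ∧ w j = y ∧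
        (∀ ζ ∈ s, i ≤ ζ → ζ ≤ j → w ζ ∈ F ζ) ∧
        (∀ ζ ∈ s, ∀ ζ' ∈ s, i ≤ ζ → ζ' ≤ j → ConsecIn s ζ ζ' → w ζ ≤ w ζ')))) ∨
   (∃ i ∈ s, ∃ j ∈ s, j < i ∧ x ∈ F i ∧ y ∈ F j ∧
     ((∃ a ∈ A, x ≤ a ∧ a ≤ y) ∨
      (∃ w : ι → α, w j = y ∧ w i = x ∧
        (∀ ζ ∈ s, j ≤ ζ → ζ ≤ i → w ζ ∈ F ζ) ∧
        (∀ ζ ∈ s, ∀ ζ' ∈ s, j ≤ ζ → ζ' ≤ i → ConsecIn s ζ ζ' → w ζ' ≤ w ζ)))))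

/-!
Antisymmetry and the inclusion in `≤` are inherited from `≤`, and reflexivity only needs some
index. For transitivity of `x ≪ y ≪ z`, an `x` or `z` in `A` is handled by clause (1) and a `y`
in `A` is a bridge. Otherwise disjointness pins `x`, `y`, `z` to unique fibres `i`, `j`, `k`,
and the two cross-fibre links compose: increasing chains glue at `j`, decreasing ones are
increasing for the dual order, and a chain followed by one in the opposite direction is cut
at whichever of `i`, `k` lies nearer to `j`, its new end being bounded through `y`.
-/

section Chains

variable [Preorder α] [LinearOrder ι]

theorem monotoneOn_of_consecIn {s : Finset ι} {w : ι → α} {i j : ι}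
    (h : ∀ ζ ∈ s, ∀ ζ' ∈ s, i ≤ ζ → ζ' ≤ j → ConsecIn s ζ ζ' → w ζ ≤ w ζ') :
    MonotoneOn w (↑s ∩ Set.Icc i j) := by
  rintro a ⟨ha, hia, -⟩ b ⟨hb, -, hbj⟩ hab
  -- induction on `b`, stepping back to its predecessor in `s ∩ [a, b)`
  revert hbj hab
  refine (s.finite_toSet.wellFoundedOn (r := (· < ·))).induction hb
    (P := fun b => b ≤ j → a ≤ b → w a ≤ w b) fun b hb ih hbj hab => ?_
  rcases hab.eq_or_lt with rfl | hab
  · exact le_rfl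
  obtain ⟨c, hc, hcmax⟩ := (s.filter fun η => a ≤ η ∧ η < b).exists_max_image id
    ⟨a, Finset.mem_filter.2 ⟨ha, le_rfl, hab⟩⟩
  obtain ⟨hcs, hac, hcb⟩ := Finset.mem_filter.1 hc
  have hconsec : ConsecIn s c b := ⟨hcb, fun η hη ⟨hcη, hηb⟩ =>
    not_lt_of_ge (hcmax η (Finset.mem_filter.2 ⟨hη, hac.trans hcη.le, hηb⟩)) hcη⟩
  exact (ih c hcs hcb (hcb.le.trans hbj) hac).trans (h c hcs b hb (hia.trans hac) hbj hconsec)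

/-- `x` lies below, and `y` above, the ends of a `≤`-increasing chain through the fibres
`F ζ`, `ζ ∈ s ∩ [i, j]`. The loose ends make cutting and gluing chains free of endpoint
bookkeeping; `Reaches.exists_chain` recovers the exact chains of the depletion. -/
def Reaches (F : ι → Set α) (s : Finset ι) (i j : ι) (x y : α) : Prop :=
  ∃ w : ι → α, (∀ ζ ∈ s, i ≤ ζ → ζ ≤ j → w ζ ∈ F ζ) ∧ MonotoneOn w (↑s ∩ Set.Icc i j) ∧
    x ≤ w i ∧ w j ≤ y

variable {F : ι → Set α} {s : Finset ι} {i j k : ι} {x x' y y' z : α}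

theorem reaches_self (hx : x ∈ F i) (hxy : x ≤ y) : Reaches F s i i x y :=
  ⟨fun _ => x, fun _ _ hiζ hζi => le_antisymm hζi hiζ ▸ hx, monotoneOn_const, le_rfl, hxy⟩

namespace Reaches

theorem mono (h : Reaches F s i j x y) (hx : x' ≤ x) (hy : y ≤ y') : Reaches F s i j x' y' :=
  let ⟨w, hF, hw, hxw, hwy⟩ := h
  ⟨w, hF, hw, hx.trans hxw, hwy.trans hy⟩

theorem restrict_right (h : Reaches F s i j x y) (hk : k ∈ s) (hj : j ∈ s) (hik : i ≤ k)
    (hkj : k ≤ j) : Reaches F s i k x y :=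
  let ⟨w, hF, hw, hxw, hwy⟩ := h
  ⟨w, fun ζ hζ hiζ hζk => hF ζ hζ hiζ (hζk.trans hkj),
    hw.mono (Set.inter_subset_inter_right _ (Set.Icc_subset_Icc_right hkj)), hxw,
    (hw ⟨hk, hik, hkj⟩ ⟨hj, hik.trans hkj, le_rfl⟩ hkj).trans hwy⟩

theorem restrict_left (h : Reaches F s i j x y) (hi : i ∈ s) (hk : k ∈ s) (hik : i ≤ k)
    (hkj : k ≤ j) : Reaches F s k j x y :=
  let ⟨w, hF, hw, hxw, hwy⟩ := h
  ⟨w, fun ζ hζ hkζ hζj => hF ζ hζ (hik.trans hkζ) hζj,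
    hw.mono (Set.inter_subset_inter_right _ (Set.Icc_subset_Icc_left hik)),
    hxw.trans (hw ⟨hi, le_rfl, hik.trans hkj⟩ ⟨hk, hik, hkj⟩ hik), hwy⟩

theorem trans (h₁ : Reaches F s i j x y) (h₂ : Reaches F s j k y z) (hj : j ∈ s)
    (hij : i ≤ j) (hjk : j ≤ k) : Reaches F s i k x z := by
  obtain ⟨w₁, hF₁, hw₁, hxw, hwy⟩ := h₁
  obtain ⟨w₂, hF₂, hw₂, hyw, hwz⟩ := h₂
  have hjump : ∀ ζ ∈ s, ∀ ζ' ∈ s, i ≤ ζ → ζ ≤ j → ζ' ≤ k → j ≤ ζ' → w₁ ζ ≤ w₂ ζ' :=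
    fun ζ hζ ζ' hζ' hiζ hζj hζ'k hjζ' =>
      calc w₁ ζ ≤ w₁ j := hw₁ ⟨hζ, hiζ, hζj⟩ ⟨hj, hij, le_rfl⟩ hζj
        _ ≤ w₂ j := hwy.trans hyw
        _ ≤ w₂ ζ' := hw₂ ⟨hj, le_rfl, hjk⟩ ⟨hζ', hjζ', hζ'k⟩ hjζ'
  refine ⟨fun ζ => if ζ ≤ j then w₁ ζ else w₂ ζ, fun ζ hζ hiζ hζk => ?_, ?_, ?_, ?_⟩
  · dsimp only
    split_ifs with hζj
    exacts [hF₁ ζ hζ hiζ hζj, hF₂ ζ hζ (le_of_not_ge hζj) hζk]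
  · rintro a ⟨ha, hia, hak⟩ b ⟨hb, hib, hbk⟩ hab
    dsimp only
    split_ifs with haj hbj hbj
    · exact hw₁ ⟨ha, hia, haj⟩ ⟨hb, hib, hbj⟩ hab
    · exact hjump a ha b hb hia haj hbk (le_of_not_ge hbj)
    · exact absurd (hab.trans hbj) haj
    · exact hw₂ ⟨ha, le_of_not_ge haj, hak⟩ ⟨hb, le_of_not_ge hbj, hbk⟩ hab
  · simpa only [if_pos hij] using hxw
  · dsimp only
    split_ifs with hkj
    · obtain rfl := hjk.antisymm hkj
      exact hwy.trans (hyw.trans hwz)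
    · exact hwz

theorem exists_chain (h : Reaches F s i j x y) (hij : i < j) (hx : x ∈ F i) (hy : y ∈ F j) :
    ∃ w : ι → α, w i = x ∧ w j = y ∧ (∀ ζ ∈ s, i ≤ ζ → ζ ≤ j → w ζ ∈ F ζ) ∧
      (∀ ζ ∈ s, ∀ ζ' ∈ s, i ≤ ζ → ζ' ≤ j → ConsecIn s ζ ζ' → w ζ ≤ w ζ') := by
  obtain ⟨w, hF, hw, hxw, hwy⟩ := h
  set v : ι → α := fun ζ => if ζ = i then x else if ζ = j then y else w ζ with hv
  have hvw : ∀ ζ, ζ ≠ j → v ζ ≤ w ζ := by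
    intro ζ hζj
    simp only [hv, if_neg hζj]
    split_ifs with hζi
    exacts [hζi ▸ hxw, le_rfl]
  have hwv : ∀ ζ, ζ ≠ i → w ζ ≤ v ζ := by
    intro ζ hζi
    simp only [hv, if_neg hζi]
    split_ifs with hζj
    exacts [hζj ▸ hwy, le_rfl]
  refine ⟨v, if_pos rfl, by simp only [hv, if_neg hij.ne', if_pos], fun ζ hζ hiζ hζj => ?_,
    fun ζ hζ ζ' hζ' hiζ hζ'j ⟨hlt, _⟩ => ?_⟩
  · simp only [hv]
    split_ifs with hζi hζj'
    exacts [hζi ▸ hx, hζj' ▸ hy, hF ζ hζ hiζ hζj]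
  · calc v ζ ≤ w ζ := hvw ζ (hlt.trans_le hζ'j).ne
      _ ≤ w ζ' := hw ⟨hζ, hiζ, hlt.le.trans hζ'j⟩ ⟨hζ', hiζ.trans hlt.le, hζ'j⟩ hlt.le
      _ ≤ v ζ' := hwv ζ' (hiζ.trans_lt hlt).ne'

end Reaches

/-- The cross-fibre clauses (2) and (3) of the depletion, with `i = j` allowed; a decreasing
chain of clause (3) is an increasing chain for the dual order. -/
def Linked (A : Set α) (F : ι → Set α) (s : Finset ι) (i j : ι) (x y : α) : Prop :=
  (∃ a ∈ A, x ≤ a ∧ a ≤ y) ∨ (i ≤ j ∧ Reaches F s i j x y) ∨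
    (j ≤ i ∧ Reaches (α := αᵒᵈ) F s j i (OrderDual.toDual y) (OrderDual.toDual x))

theorem Linked.trans {A : Set α} (h₁ : Linked A F s i j x y) (h₂ : Linked A F s j k y z)
    (hxy : x ≤ y) (hyz : y ≤ z) (hi : i ∈ s) (hj : j ∈ s) (hk : k ∈ s) :
    Linked A F s i k x z := by
  rcases h₁ with ⟨a, ha, hxa, hay⟩ | ⟨hij, r₁⟩ | ⟨hji, r₁⟩
  · exact Or.inl ⟨a, ha, hxa, hay.trans hyz⟩
  all_goals rcases h₂ with ⟨a, ha, hya, haz⟩ | ⟨hjk, r₂⟩ | ⟨hkj, r₂⟩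
  all_goals try exact Or.inl ⟨a, ha, hxy.trans hya, haz⟩
  · exact Or.inr (Or.inl ⟨hij.trans hjk, r₁.trans r₂ hj hij hjk⟩)
  · rcases le_total i k with hik | hki
    · exact Or.inr (Or.inl ⟨hik, (r₁.restrict_right hk hj hik hkj).mono le_rfl hyz⟩)
    · exact Or.inr (Or.inr ⟨hki, (r₂.restrict_right hi hj hki hij).mono le_rfl hxy⟩)
  · rcases le_total i k with hik | hki
    · exact Or.inr (Or.inl ⟨hik, (r₂.restrict_left hj hi hji hik).mono hxy le_rfl⟩)
    · exact Or.inr (Or.inr ⟨hki, (r₁.restrict_left hj hk hjk hki).mono hyz le_rfl⟩)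
  · exact Or.inr (Or.inr ⟨hkj.trans hji, r₂.trans r₁ hj hkj hji⟩)

end Chains

theorem eq_of_mem_fiber {A : Set α} {F : ι → Set α} {s : Finset ι} {i ξ : ι} {x : α}
    (hAF : ∀ ξ ∈ s, Disjoint A (F ξ)) (hFF : ∀ ξ ∈ s, ∀ η ∈ s, ξ ≠ η → Disjoint (F ξ) (F η))
    (hi : i ∈ s) (hξ : ξ ∈ s) (hx : x ∈ F i) (hx' : x ∈ A ∪ F ξ) : ξ = i := by
  rcases hx' with hxA | hxξ
  · exact absurd hx (Set.disjoint_left.1 (hAF i hi) hxA)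
  · by_contra hne
    exact Set.disjoint_left.1 (hFF ξ hξ i hi hne) hxξ hx

theorem exists_mem_union_of_mem_biUnion {A : Set α} {F : ι → Set α} {s : Finset ι} {x : α}
    (hs : s.Nonempty) (hx : x ∈ A ∪ ⋃ ξ ∈ s, F ξ) : ∃ ξ ∈ s, x ∈ A ∪ F ξ := by
  rcases hx with hxA | hx
  · obtain ⟨ξ, hξ⟩ := hs
    exact ⟨ξ, hξ, Or.inl hxA⟩
  · obtain ⟨ξ, hξ, hxξ⟩ := Set.mem_iUnion₂.1 hx
    exact ⟨ξ, hξ, Or.inr hxξ⟩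

section Depletion

variable [PartialOrder α] [LinearOrder ι] {A : Set α} {F : ι → Set α} {s : Finset ι}
  {i j k : ι} {x y z : α}

theorem Linked.depl (h : Linked A F s i j x y) (hi : i ∈ s) (hj : j ∈ s) (hx : x ∈ F i)
    (hy : y ∈ F j) (hxy : x ≤ y) : Depl A F s x y := by
  refine ⟨hxy, ?_⟩
  rcases lt_trichotomy i j with hij | rfl | hji
  · refine Or.inr (Or.inl ⟨i, hi, j, hj, hij, hx, hy, ?_⟩)
    rcases h with hA | ⟨-, r⟩ | ⟨hji, -⟩
    · exact Or.inl hA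
    · exact Or.inr (r.exists_chain hij hx hy)
    · exact absurd hij hji.not_gt
  · exact Or.inl ⟨i, hi, Or.inr hx, Or.inr hy⟩
  · refine Or.inr (Or.inr ⟨i, hi, j, hj, hji, hx, hy, ?_⟩)
    rcases h with hA | ⟨hij, -⟩ | ⟨-, r⟩
    · exact Or.inl hA
    · exact absurd hji hij.not_gt
    · exact Or.inr (r.exists_chain hji hy hx)

theorem Depl.linked (hAF : ∀ ξ ∈ s, Disjoint A (F ξ))
    (hFF : ∀ ξ ∈ s, ∀ η ∈ s, ξ ≠ η → Disjoint (F ξ) (F η)) (h : Depl A F s x y)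
    (hi : i ∈ s) (hj : j ∈ s) (hx : x ∈ F i) (hy : y ∈ F j) : Linked A F s i j x y := by
  obtain ⟨hxy, ⟨ξ, hξ, hxξ, hyξ⟩ | ⟨i', hi', j', hj', hij, hx', hy', hc⟩ |
    ⟨i', hi', j', hj', hji, hx', hy', hc⟩⟩ := h
  · obtain rfl := eq_of_mem_fiber hAF hFF hi hξ hx hxξ
    obtain rfl := eq_of_mem_fiber hAF hFF hj hξ hy hyξ
    exact Or.inr (Or.inl ⟨le_rfl, reaches_self hx hxy⟩)
  all_goals
    obtain rfl := eq_of_mem_fiber hAF hFF hi hi' hx (Or.inr hx')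
    obtain rfl := eq_of_mem_fiber hAF hFF hj hj' hy (Or.inr hy')
    rcases hc with hA | ⟨w, hw₁, hw₂, hF, hw⟩
    · exact Or.inl hA
  · exact Or.inr (Or.inl ⟨hij.le, w, hF, monotoneOn_of_consecIn hw, hw₁.ge, hw₂.le⟩)
  · exact Or.inr (Or.inr ⟨hji.le, w, hF, monotoneOn_of_consecIn (α := αᵒᵈ) hw, hw₁.le, hw₂.ge⟩)

theorem depl_trans (hs : s.Nonempty) (hAF : ∀ ξ ∈ s, Disjoint A (F ξ))
    (hFF : ∀ ξ ∈ s, ∀ η ∈ s, ξ ≠ η → Disjoint (F ξ) (F η)) (hx : x ∈ A ∪ ⋃ ξ ∈ s, F ξ)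
    (hy : y ∈ A ∪ ⋃ ξ ∈ s, F ξ) (hz : z ∈ A ∪ ⋃ ξ ∈ s, F ξ) (hxy : Depl A F s x y)
    (hyz : Depl A F s y z) : Depl A F s x z := by
  have hxz : x ≤ z := hxy.1.trans hyz.1
  rcases hx with hxA | hx
  · obtain ⟨ξ, hξ, hzξ⟩ := exists_mem_union_of_mem_biUnion hs hz
    exact ⟨hxz, Or.inl ⟨ξ, hξ, Or.inl hxA, hzξ⟩⟩
  rcases hz with hzA | hz
  · obtain ⟨ξ, hξ, hxξ⟩ := exists_mem_union_of_mem_biUnion hs (Or.inr hx)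
    exact ⟨hxz, Or.inl ⟨ξ, hξ, hxξ, Or.inl hzA⟩⟩
  obtain ⟨i, hi, hxi⟩ := Set.mem_iUnion₂.1 hx
  obtain ⟨k, hk, hzk⟩ := Set.mem_iUnion₂.1 hz
  refine Linked.depl ?_ hi hk hxi hzk hxz
  rcases hy with hyA | hy
  · exact Or.inl ⟨y, hyA, hxy.1, hyz.1⟩
  obtain ⟨j, hj, hyj⟩ := Set.mem_iUnion₂.1 hy
  exact (hxy.linked hAF hFF hi hj hxi hyj).trans (hyz.linked hAF hFF hj hk hyj hzk)
    hxy.1 hyz.1 hi hj hk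

end Depletion

/-- If the finite linearly ordered index set `s` has at least two elements, the depletion
`≪_s` of `≤` is a partial order on `E = A ∪ ⋃_{ξ ∈ s} F ξ` (reflexive, antisymmetric,
transitive) whose graph is included in the graph of `≤`. -/
theorem stmt5 [PartialOrder α] [LinearOrder ι] (A : Set α) (F : ι → Set α)
    (s : Finset ι) (hcard : 2 ≤ s.card)
    (hAF : ∀ ξ ∈ s, Disjoint A (F ξ))
    (hFF : ∀ ξ ∈ s, ∀ η ∈ s, ξ ≠ η → Disjoint (F ξ) (F η)) :
    (∀ x ∈ A ∪ ⋃ ξ ∈ s, F ξ, Depl A F s x x) ∧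
    (∀ x ∈ A ∪ ⋃ ξ ∈ s, F ξ, ∀ y ∈ A ∪ ⋃ ξ ∈ s, F ξ,
      Depl A F s x y → Depl A F s y x → x = y) ∧
    (∀ x ∈ A ∪ ⋃ ξ ∈ s, F ξ, ∀ y ∈ A ∪ ⋃ ξ ∈ s, F ξ, ∀ z ∈ A ∪ ⋃ ξ ∈ s, F ξ,
      Depl A F s x y → Depl A F s y z → Depl A F s x z) ∧
    (∀ x y : α, Depl A F s x y → x ≤ y) := by
  have hs : s.Nonempty := Finset.card_pos.1 (by omega)
  refine ⟨fun x hx => ?_, fun x _ y _ hxy hyx => le_antisymm hxy.1 hyx.1,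
    fun x hx y hy z hz => depl_trans hs hAF hFF hx hy hz, fun x y h => h.1⟩
  obtain ⟨ξ, hξ, hxξ⟩ := exists_mem_union_of_mem_biUnion hs hx
  exact ⟨le_rfl, Or.inl ⟨ξ, hξ, hxξ, hxξ⟩⟩
end

section
/- Let I be a linearly ordered set, let A and F(ξ), for ξ ∈ I, be pairwise disjoint sets, and let ≤ be a partial order on a set including A ∪ ⋃_{ξ∈I} F(ξ). If s ⊆ t are finite subsets of I with |s| ≥ 2, then for any two elements x and y of A ∪ ⋃_{ξ∈s} F(ξ), x ≪_t y implies x ≪_s y. -/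
/-! Disjointness forces the end indices of a witness for `x ≪_t y` with `x, y` in
`A ∪ ⋃_{ξ ∈ s} F ξ` to lie in `s`, and a `t`-chain is an `s`-chain: a step between neighbours
in `s` is a composite of steps between neighbours in `t`. -/

variable {α ι : Type*}

section Chain

variable [Preorder α] [LinearOrder ι] {t : Finset ι} {i j : ι} {w : ι → α}

lemma consecIn_max'_filter_lt {ζ' : ι} (hne : (t.filter (· < ζ')).Nonempty) :
    ConsecIn t ((t.filter (· < ζ')).max' hne) ζ' := by
  refine ⟨(Finset.mem_filter.mp (Finset.max'_mem _ hne)).2, fun η hη ⟨hlt, hη'⟩ => ?_⟩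
  exact hlt.not_ge (Finset.le_max' _ η (Finset.mem_filter.mpr ⟨hη, hη'⟩))

lemma le_of_le_of_consecIn
    (h : ∀ ζ ∈ t, ∀ ζ' ∈ t, i ≤ ζ → ζ' ≤ j → ConsecIn t ζ ζ' → w ζ ≤ w ζ')
    {ζ ζ' : ι} (hζ : ζ ∈ t) (hζ' : ζ' ∈ t) (hi : i ≤ ζ) (hj : ζ' ≤ j) (hle : ζ ≤ ζ') :
    w ζ ≤ w ζ' := by
  rcases hle.eq_or_lt with rfl | hlt
  · exact le_rfl
  have hne : (t.filter (· < ζ')).Nonempty := ⟨ζ, Finset.mem_filter.mpr ⟨hζ, hlt⟩⟩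
  set η := (t.filter (· < ζ')).max' hne
  obtain ⟨hη, hηζ'⟩ := Finset.mem_filter.mp (Finset.max'_mem _ hne)
  have hζη : ζ ≤ η := Finset.le_max' _ ζ (Finset.mem_filter.mpr ⟨hζ, hlt⟩)
  exact (le_of_le_of_consecIn h hζ hη hi (hηζ'.le.trans hj) hζη).trans
    (h η hη ζ' hζ' (hi.trans hζη) hj (consecIn_max'_filter_lt hne))
termination_by (t.filter (· < ζ')).card
decreasing_by
  refine Finset.card_lt_card (Finset.ssubset_iff_of_subset ?_ |>.mpr
    ⟨η, Finset.mem_filter.mpr ⟨hη, hηζ'⟩, fun h => (Finset.mem_filter.mp h).2.false⟩)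
  intro θ hθ
  obtain ⟨hθt, hθη⟩ := Finset.mem_filter.mp hθ
  exact Finset.mem_filter.mpr ⟨hθt, hθη.trans hηζ'⟩

lemma chain_of_chain_of_subset {s : Finset ι} (hst : s ⊆ t)
    (h : ∀ ζ ∈ t, ∀ ζ' ∈ t, i ≤ ζ → ζ' ≤ j → ConsecIn t ζ ζ' → w ζ ≤ w ζ') :
    ∀ ζ ∈ s, ∀ ζ' ∈ s, i ≤ ζ → ζ' ≤ j → ConsecIn s ζ ζ' → w ζ ≤ w ζ' :=
  fun _ hζ _ hζ' hi hj hc => le_of_le_of_consecIn h (hst hζ) (hst hζ') hi hj hc.1.le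

end Chain

lemma mem_of_mem_union_of_mem [LinearOrder ι] {A : Set α} {F : ι → Set α}
    (hAF : ∀ ξ : ι, Disjoint A (F ξ)) (hFF : ∀ ξ η : ι, ξ ≠ η → Disjoint (F ξ) (F η))
    {s : Finset ι} {z : α} (hz : z ∈ A ∪ ⋃ ξ ∈ s, F ξ) {i : ι} (hzi : z ∈ F i) : i ∈ s := by
  rcases hz with hzA | hzF
  · exact absurd hzi (Set.disjoint_left.mp (hAF i) hzA)
  obtain ⟨ξ, hξ, hzξ⟩ := Set.mem_iUnion₂.mp hzF
  obtain rfl : ξ = i := by_contra fun hne => Set.disjoint_left.mp (hFF ξ i hne) hzξ hzi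
  exact hξ

/-- If `s ⊆ t` are finite subsets of the index set and `|s| ≥ 2`, then for any two
elements `x, y` of `A ∪ ⋃_{ξ ∈ s} F ξ`, `x ≪_t y` implies `x ≪_s y`. -/
theorem stmt6 [PartialOrder α] [LinearOrder ι] (A : Set α) (F : ι → Set α)
    (hAF : ∀ ξ : ι, Disjoint A (F ξ))
    (hFF : ∀ ξ η : ι, ξ ≠ η → Disjoint (F ξ) (F η))
    (s t : Finset ι) (hst : s ⊆ t) (hcard : 2 ≤ s.card) :
    ∀ x ∈ A ∪ ⋃ ξ ∈ s, F ξ, ∀ y ∈ A ∪ ⋃ ξ ∈ s, F ξ,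
      Depl A F t x y → Depl A F s x y := by
  have hmem := @mem_of_mem_union_of_mem _ _ _ A F hAF hFF s
  intro x hx y hy ⟨hxy, hcase⟩
  refine ⟨hxy, ?_⟩
  rcases hcase with ⟨ξ, -, hxA | hxF, hyξ⟩ | ⟨i, -, j, -, hij, hxi, hyj, hrest⟩ |
    ⟨i, -, j, -, hji, hxi, hyj, hrest⟩
  · rcases hyξ with hyA | hyF
    · obtain ⟨ξ₀, hξ₀⟩ := Finset.card_pos.mp (by omega : 0 < s.card)
      exact Or.inl ⟨ξ₀, hξ₀, Or.inl hxA, Or.inl hyA⟩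
    · exact Or.inl ⟨ξ, hmem hy hyF, Or.inl hxA, Or.inr hyF⟩
  · exact Or.inl ⟨ξ, hmem hx hxF, Or.inr hxF, hyξ⟩
  · refine Or.inr (Or.inl ⟨i, hmem hx hxi, j, hmem hy hyj, hij, hxi, hyj, ?_⟩)
    rcases hrest with ha | ⟨w, hwi, hwj, hwF, hw⟩
    · exact Or.inl ha
    · exact Or.inr ⟨w, hwi, hwj, fun ζ hζ => hwF ζ (hst hζ), chain_of_chain_of_subset hst hw⟩
  · refine Or.inr (Or.inr ⟨i, hmem hx hxi, j, hmem hy hyj, hji, hxi, hyj, ?_⟩)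
    rcases hrest with ha | ⟨w, hwj, hwi, hwF, hw⟩
    · exact Or.inl ha
    · exact Or.inr ⟨w, hwj, hwi, fun ζ hζ => hwF ζ (hst hζ),
        chain_of_chain_of_subset (α := αᵒᵈ) hst hw⟩
end

section
/- Let I be a linearly ordered set, let A and F(ξ), for ξ ∈ I, be pairwise disjoint sets, and let ≤ be a partial order on a set including A ∪ ⋃_{ξ∈I} F(ξ). If s ⊆ t are finite subsets of I with |s| ≥ 2 and s is convex in t (i.e., whenever ξ < η < ζ are in t and ξ, ζ ∈ s, then η ∈ s), then ≪_s agrees with the restriction of ≪_t to A ∪ ⋃_{ξ∈s} F(ξ). -/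
/-!
Between two indices of `s`, convexity makes `s` and `t` have the same elements, so the
chains of clauses (2) and (3) run through the same pieces `F ζ` and link the same consecutive
pairs whether they are read in `s` or in `t`. Disjointness of the pieces pins down the indices
of `x` and `y`, which therefore lie in `s`; when `x, y ∈ A`, any index of the nonempty `s`
serves for clause (1).
-/

variable {α ι : Type*}

lemma mem_of_mem_union_biUnion {A : Set α} {F : ι → Set α}
    (hAF : ∀ ξ : ι, Disjoint A (F ξ)) (hFF : ∀ ξ η : ι, ξ ≠ η → Disjoint (F ξ) (F η))
    {s : Finset ι} {x : α} (hx : x ∈ A ∪ ⋃ ξ ∈ s, F ξ) {i : ι} (hxi : x ∈ F i) : i ∈ s := by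
  rcases hx with hxA | hx
  · exact absurd hxi ((hAF i).notMem_of_mem_left hxA)
  obtain ⟨ξ, hξ, hxξ⟩ := Set.mem_iUnion₂.mp hx
  by_contra hi
  exact (hFF ξ i (ne_of_mem_of_not_mem hξ hi)).notMem_of_mem_left hxξ hxi

lemma Finset.exists₂_mem_iff_of_subset {s t : Finset ι} {R R' : ι → ι → Prop} (hst : s ⊆ t)
    (hR' : ∀ i j, R' i j → i ∈ s ∧ j ∈ s) (h : ∀ i ∈ s, ∀ j ∈ s, R i j ↔ R' i j) :
    (∃ i ∈ s, ∃ j ∈ s, R i j) ↔ ∃ i ∈ t, ∃ j ∈ t, R' i j := by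
  constructor
  · rintro ⟨i, hi, j, hj, hij⟩
    exact ⟨i, hst hi, j, hst hj, (h i hi j hj).1 hij⟩
  · rintro ⟨i, -, j, -, hij⟩
    obtain ⟨hi, hj⟩ := hR' i j hij
    exact ⟨i, hi, j, hj, (h i hi j hj).2 hij⟩

section Convex

variable [LinearOrder ι] {s t : Finset ι}

/-- The chains `x_l ∈ F(ξ(i+l))` of clauses (2) and (3) of `≪_s`, indexed by `ι` rather than
by position in `s`, with `r` the relation between consecutive links. -/
def IsChainOn (r : α → α → Prop) (F : ι → Set α) (s : Finset ι) (i j : ι) (w : ι → α) : Prop :=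
  (∀ ζ ∈ s, i ≤ ζ → ζ ≤ j → w ζ ∈ F ζ) ∧
  ∀ ζ ∈ s, ∀ ζ' ∈ s, i ≤ ζ → ζ' ≤ j → ConsecIn s ζ ζ' → r (w ζ) (w ζ')

lemma ConsecIn.of_superset (hst : s ⊆ t) {ζ ζ' : ι} (h : ConsecIn t ζ ζ') : ConsecIn s ζ ζ' :=
  ⟨h.1, fun η hη => h.2 η (hst hη)⟩

variable (hconvex : ∀ ξ ∈ s, ∀ ζ ∈ s, ∀ η ∈ t, ξ < η → η < ζ → η ∈ s)
include hconvex

lemma ConsecIn.of_convex {ζ ζ' : ι} (hζ : ζ ∈ s) (hζ' : ζ' ∈ s) (h : ConsecIn s ζ ζ') :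
    ConsecIn t ζ ζ' :=
  ⟨h.1, fun η hη hlt => h.2 η (hconvex ζ hζ ζ' hζ' η hη hlt.1 hlt.2) hlt⟩

lemma mem_of_convex_of_le_of_le {i j ζ : ι} (hi : i ∈ s) (hj : j ∈ s) (hζ : ζ ∈ t)
    (hiζ : i ≤ ζ) (hζj : ζ ≤ j) : ζ ∈ s := by
  rcases hiζ.eq_or_lt with rfl | hiζ
  · exact hi
  rcases hζj.eq_or_lt with rfl | hζj
  · exact hj
  exact hconvex i hi j hj ζ hζ hiζ hζj

lemma isChainOn_iff_of_convex (r : α → α → Prop) {F : ι → Set α} {i j : ι} {w : ι → α}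
    (hst : s ⊆ t) (hi : i ∈ s) (hj : j ∈ s) :
    IsChainOn r F s i j w ↔ IsChainOn r F t i j w := by
  have hmem : ∀ ζ ∈ t, i ≤ ζ → ζ ≤ j → ζ ∈ s := fun _ => mem_of_convex_of_le_of_le hconvex hi hj
  constructor
  · rintro ⟨hF, hr⟩
    refine ⟨fun ζ hζ hiζ hζj => hF ζ (hmem ζ hζ hiζ hζj) hiζ hζj,
      fun ζ hζ ζ' hζ' hiζ hζ'j hc => hr ζ ?_ ζ' ?_ hiζ hζ'j (hc.of_superset hst)⟩
    · exact hmem ζ hζ hiζ (hc.1.le.trans hζ'j)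
    · exact hmem ζ' hζ' (hiζ.trans hc.1.le) hζ'j
  · rintro ⟨hF, hr⟩
    exact ⟨fun ζ hζ => hF ζ (hst hζ), fun ζ hζ ζ' hζ' hiζ hζ'j hc =>
      hr ζ (hst hζ) ζ' (hst hζ') hiζ hζ'j (hc.of_convex hconvex hζ hζ')⟩

end Convex

/-- If `s ⊆ t` are finite subsets of the index set, `|s| ≥ 2`, and `s` is convex in `t`
(whenever `ξ < η < ζ` are in `t` and `ξ, ζ ∈ s` then `η ∈ s`), then `≪_s` agrees with the
restriction of `≪_t` to `A ∪ ⋃_{ξ ∈ s} F ξ`. -/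
theorem stmt7 [PartialOrder α] [LinearOrder ι] (A : Set α) (F : ι → Set α)
    (hAF : ∀ ξ : ι, Disjoint A (F ξ))
    (hFF : ∀ ξ η : ι, ξ ≠ η → Disjoint (F ξ) (F η))
    (s t : Finset ι) (hst : s ⊆ t) (hcard : 2 ≤ s.card)
    (hconvex : ∀ ξ ∈ s, ∀ ζ ∈ s, ∀ η ∈ t, ξ < η → η < ζ → η ∈ s) :
    ∀ x ∈ A ∪ ⋃ ξ ∈ s, F ξ, ∀ y ∈ A ∪ ⋃ ξ ∈ s, F ξ,
      (Depl A F s x y ↔ Depl A F t x y) := by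
  intro x hx y hy
  have hxs : ∀ {i}, x ∈ F i → i ∈ s := mem_of_mem_union_biUnion hAF hFF hx
  have hys : ∀ {j}, y ∈ F j → j ∈ s := mem_of_mem_union_biUnion hAF hFF hy
  refine and_congr_right fun _ => or_congr ?_ (or_congr ?_ ?_)
  · refine ⟨fun ⟨ξ, hξ, h⟩ => ⟨ξ, hst hξ, h⟩, fun ⟨ξ, hξ, hxξ, hyξ⟩ => ?_⟩
    by_cases hξs : ξ ∈ s
    · exact ⟨ξ, hξs, hxξ, hyξ⟩
    obtain ⟨ξ₀, hξ₀⟩ := s.card_pos.mp (by omega)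
    exact ⟨ξ₀, hξ₀, .inl (hxξ.resolve_right (mt hxs hξs)), .inl (hyξ.resolve_right (mt hys hξs))⟩
  · refine Finset.exists₂_mem_iff_of_subset hst (fun i j h => ⟨hxs h.2.1, hys h.2.2.1⟩)
      fun i hi j hj => ?_
    exact and_congr_right' <| and_congr_right' <| and_congr_right' <| or_congr_right <|
      exists_congr fun w => and_congr_right' <| and_congr_right' <|
        isChainOn_iff_of_convex hconvex (· ≤ ·) hst hi hj
  · refine Finset.exists₂_mem_iff_of_subset hst (fun i j h => ⟨hxs h.2.1, hys h.2.2.1⟩)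
      fun i hi j hj => ?_
    exact and_congr_right' <| and_congr_right' <| and_congr_right' <| or_congr_right <|
      exists_congr fun w => and_congr_right' <| and_congr_right' <|
        isChainOn_iff_of_convex hconvex (· ≥ ·) hst hj hi
end

section
/- Suppose κ is an uncountable cardinal, A and F(ξ), for ξ < κ, are pairwise disjoint sets with A countable and each F(ξ) finite, and ≤ is a partial order on E := A ∪ ⋃_{ξ<κ} F(ξ) such that E has neither κ-chains nor κ*-chains. Then there exists a cofinal set X ⊆ κ such that for any two distinct elements ξ and η of X there is a finite set s ⊆ κ with {ξ, η} = {min(s), max(s)} and there is no s-walk whose two endpoints are in F(ξ) and F(η). -/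
/-!
Call `ξ ≤ η` linked if every finite `s ⊆ [ξ, η]` containing both admits an `s`-walk.
If every `ξ` has a bound `β ξ` beyond which it is linked to nothing, the greedy set of indices
`η` with `β ξ ≤ η` for all earlier members `ξ` is cofinal and pairwise unlinked.
Otherwise some `ξ₀` is linked to every `η > ξ₀`, so every finite subset of `(ξ₀, κ)` carries a
walk. As each `F ζ` is finite, these walks have a pointwise limit along an ultrafilter on finite
sets, which is an increasing (or decreasing) walk on every finite subset of `(ξ₀, κ)`; since the
`F ζ` are disjoint it is strictly monotone there, giving a `κ`-chain (or `κ*`-chain) in `E`.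
-/

variable {α ι : Type*}

/-- An increasing `s`-walk: a family `w` with `w ζ ∈ F ζ` for `ζ ∈ s`, increasing on
consecutive elements of `s`. -/
def IsIncWalkOn [Preorder α] [LinearOrder ι] (F : ι → Set α) (s : Finset ι)
    (w : ι → α) : Prop :=
  (∀ ζ ∈ s, w ζ ∈ F ζ) ∧
  ∀ ζ ∈ s, ∀ ζ' ∈ s, ζ < ζ' → (∀ η ∈ s, ¬(ζ < η ∧ η < ζ')) → w ζ ≤ w ζ'

/-- A decreasing `s`-walk: a family `w` with `w ζ ∈ F ζ` for `ζ ∈ s`, decreasing on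
consecutive elements of `s`. -/
def IsDecWalkOn [Preorder α] [LinearOrder ι] (F : ι → Set α) (s : Finset ι)
    (w : ι → α) : Prop :=
  (∀ ζ ∈ s, w ζ ∈ F ζ) ∧
  ∀ ζ ∈ s, ∀ ζ' ∈ s, ζ < ζ' → (∀ η ∈ s, ¬(ζ < η ∧ η < ζ')) → w ζ' ≤ w ζ

/-- An `s`-walk is a family which is either an increasing or a decreasing walk;
its endpoints are its values at `min s` and `max s`. -/
def IsWalkOn [Preorder α] [LinearOrder ι] (F : ι → Set α) (s : Finset ι)
    (w : ι → α) : Prop :=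
  IsIncWalkOn F s w ∨ IsDecWalkOn F s w

open Finset Function

section Walks

variable [Preorder α] [LinearOrder ι] {F : ι → Set α} {s t : Finset ι} {v w : ι → α}

theorem IsIncWalkOn.monotoneOn (h : IsIncWalkOn F s w) : MonotoneOn w s := by
  rcases s.eq_empty_or_nonempty with rfl | hne
  · exact fun _ ha => (notMem_empty _ ha).elim
  obtain ⟨n, hn⟩ : ∃ n, #s = n + 1 := ⟨_, (Nat.succ_pred_eq_of_pos hne.card_pos).symm⟩
  set e := s.orderEmbOfFin hn
  have hmem : ∀ i, e i ∈ s := s.orderEmbOfFin_mem hn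
  have hrange : ∀ ζ ∈ s, ∃ i, e i = ζ := fun ζ hζ => by
    rwa [← Set.mem_range, range_orderEmbOfFin]
  have hmono : Monotone (w ∘ e) := Fin.monotone_iff_le_succ.2 fun i =>
    h.2 _ (hmem _) _ (hmem _) (e.strictMono i.castSucc_lt_succ) fun η hη ⟨h₁, h₂⟩ => by
      obtain ⟨k, rfl⟩ := hrange η hη
      exact (Fin.castSucc_lt_iff_succ_le.1 (e.lt_iff_lt.1 h₁)).not_gt (e.lt_iff_lt.1 h₂)
  rintro _ ha _ hb hab
  obtain ⟨i, rfl⟩ := hrange _ ha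
  obtain ⟨j, rfl⟩ := hrange _ hb
  exact hmono (e.le_iff_le.1 hab)

theorem IsIncWalkOn.mono (h : IsIncWalkOn F s w) (hts : t ⊆ s) : IsIncWalkOn F t w :=
  ⟨fun ζ hζ => h.1 ζ (hts hζ), fun _ hζ _ hζ' hlt _ => h.monotoneOn (hts hζ) (hts hζ') hlt.le⟩

theorem IsIncWalkOn.congr (h : IsIncWalkOn F s w) (hwv : Set.EqOn w v s) : IsIncWalkOn F s v :=
  ⟨fun ζ hζ => hwv hζ ▸ h.1 ζ hζ,
    fun ζ hζ ζ' hζ' hlt hcons => hwv hζ ▸ hwv hζ' ▸ h.2 ζ hζ ζ' hζ' hlt hcons⟩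

theorem isIncWalkOn_toDual_iff :
    IsIncWalkOn (fun ζ => OrderDual.ofDual ⁻¹' F ζ) s (OrderDual.toDual ∘ w) ↔
      IsDecWalkOn F s w :=
  Iff.rfl

theorem IsDecWalkOn.mono (h : IsDecWalkOn F s w) (hts : t ⊆ s) : IsDecWalkOn F t w :=
  isIncWalkOn_toDual_iff.1 ((isIncWalkOn_toDual_iff.2 h).mono hts)

theorem IsDecWalkOn.congr (h : IsDecWalkOn F s w) (hwv : Set.EqOn w v s) : IsDecWalkOn F s v :=
  isIncWalkOn_toDual_iff.1
    ((isIncWalkOn_toDual_iff.2 h).congr fun _ hζ => congrArg OrderDual.toDual (hwv hζ))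

theorem IsWalkOn.mono (h : IsWalkOn F s w) (hts : t ⊆ s) : IsWalkOn F t w :=
  h.imp (·.mono hts) (·.mono hts)

end Walks

section Compactness

variable [LinearOrder ι] {F : ι → Set α} {T : Set ι}

theorem exists_forall_isIncWalkOn_or_forall_isDecWalkOn [Preorder α]
    (hF : ∀ ζ, (F ζ).Finite) (h : ∀ s : Finset ι, ↑s ⊆ T → ∃ w, IsWalkOn F s w) :
    ∃ v : ι → α, (∀ s : Finset ι, ↑s ⊆ T → IsIncWalkOn F s v) ∨
      ∀ s : Finset ι, ↑s ⊆ T → IsDecWalkOn F s v := by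
  classical
  let U : Ultrafilter (Finset ι) := .of Filter.atTop
  have hU : ∀ s : Finset ι, ∀ᶠ p in U, s ⊆ p := fun s =>
    Ultrafilter.of_le _ (Filter.eventually_ge_atTop s)
  choose w hw using fun p : Finset ι => h (p.filter (· ∈ T)) fun ζ hζ => (mem_filter.1 hζ).2
  have hlim : ∀ ζ, ∃ x, ζ ∈ T → ∀ᶠ p in U, w p ζ = x := by
    intro ζ
    by_cases hζ : ζ ∈ T
    · have hζF : ∀ᶠ p in U, ∃ x ∈ F ζ, w p ζ = x := (hU {ζ}).mono fun p hp =>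
        ⟨_, (hw p).elim (·.1 ζ) (·.1 ζ) (mem_filter.2 ⟨hp (mem_singleton_self ζ), hζ⟩), rfl⟩
      obtain ⟨x, -, hx⟩ := (Ultrafilter.eventually_exists_mem_iff (hF ζ)).1 hζF
      exact ⟨x, fun _ => hx⟩
    · exact ⟨w ∅ ζ, fun h => absurd h hζ⟩
  choose v hv using hlim
  have hagree : ∀ s : Finset ι, ↑s ⊆ T →
      ∀ᶠ p in U, s ⊆ p.filter (· ∈ T) ∧ Set.EqOn (w p) v s := fun s hs =>
    ((hU s).and ((s.eventually_all).2 fun ζ hζ => hv ζ (hs hζ))).mono fun p ⟨hsp, heq⟩ =>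
      ⟨fun ζ hζ => mem_filter.2 ⟨hsp hζ, hs hζ⟩, heq⟩
  have hwU : ∀ᶠ p in U, IsWalkOn F (p.filter (· ∈ T)) (w p) := .of_forall hw
  refine ⟨v, (Ultrafilter.eventually_or.1 hwU).imp ?_ ?_⟩
  · intro hinc s hs
    obtain ⟨p, ⟨hsp, heq⟩, hp⟩ := ((hagree s hs).and hinc).exists
    exact (hp.mono hsp).congr heq
  · intro hdec s hs
    obtain ⟨p, ⟨hsp, heq⟩, hp⟩ := ((hagree s hs).and hdec).exists
    exact (hp.mono hsp).congr heq

theorem strictMonoOn_of_forall_isIncWalkOn [PartialOrder α] (hF : Pairwise (Disjoint on F))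
    {v : ι → α} (h : ∀ s : Finset ι, ↑s ⊆ T → IsIncWalkOn F s v) : StrictMonoOn v T := by
  intro ζ hζ ζ' hζ' hlt
  have hw := h {ζ, ζ'} (by simp [Set.insert_subset_iff, hζ, hζ'])
  exact (hw.monotoneOn (by simp) (by simp) hlt.le).lt_of_ne
    ((hF hlt.ne).ne_of_mem (hw.1 ζ (by simp)) (hw.1 ζ' (by simp)))

theorem strictAntiOn_of_forall_isDecWalkOn [PartialOrder α] (hF : Pairwise (Disjoint on F))
    {v : ι → α} (h : ∀ s : Finset ι, ↑s ⊆ T → IsDecWalkOn F s v) : StrictAntiOn v T :=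
  strictMonoOn_toDual_comp_iff.1 <| strictMonoOn_of_forall_isIncWalkOn
    (fun _ _ hne => (hF hne).preimage OrderDual.ofDual)
    fun s hs => isIncWalkOn_toDual_iff.2 (h s hs)

theorem exists_strictMonoOn_or_strictAntiOn [PartialOrder α] (hFfin : ∀ ζ, (F ζ).Finite)
    (hF : Pairwise (Disjoint on F)) (h : ∀ s : Finset ι, ↑s ⊆ T → ∃ w, IsWalkOn F s w) :
    ∃ v : ι → α, (∀ ζ ∈ T, v ζ ∈ F ζ) ∧ (StrictMonoOn v T ∨ StrictAntiOn v T) := by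
  obtain ⟨v, hinc | hdec⟩ := exists_forall_isIncWalkOn_or_forall_isDecWalkOn hFfin h
  · refine ⟨v, fun ζ hζ => (hinc {ζ} (by simpa)).1 ζ (mem_singleton_self ζ), .inl ?_⟩
    exact strictMonoOn_of_forall_isIncWalkOn hF hinc
  · refine ⟨v, fun ζ hζ => (hdec {ζ} (by simpa)).1 ζ (mem_singleton_self ζ), .inr ?_⟩
    exact strictAntiOn_of_forall_isDecWalkOn hF hdec

end Compactness

section Separation

variable [Preorder α] [LinearOrder ι] {F : ι → Set α} {ξ η η' : ι}

def HasWalksBetween (F : ι → Set α) (ξ η : ι) : Prop :=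
  ∀ s : Finset ι, ξ ∈ s → η ∈ s → ↑s ⊆ Set.Icc ξ η → ∃ w, IsWalkOn F s w

theorem HasWalksBetween.of_le (h : HasWalksBetween F ξ η') (hξη : ξ ≤ η) (hηη' : η ≤ η') :
    HasWalksBetween F ξ η := by
  intro s hξ hη hs
  obtain ⟨w, hw⟩ := h (insert η' s) (mem_insert_of_mem hξ) (mem_insert_self _ _) <| by
    rw [coe_insert]
    exact Set.insert_subset ⟨hξη.trans hηη', le_rfl⟩ (hs.trans (Set.Icc_subset_Icc_right hηη'))
  exact ⟨w, hw.mono (subset_insert _ _)⟩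

theorem exists_isWalkOn_of_forall_hasWalksBetween [NoMaxOrder ι]
    (h : ∀ η, ξ < η → HasWalksBetween F ξ η) (s : Finset ι) (hs : ↑s ⊆ Set.Ioi ξ) :
    ∃ w, IsWalkOn F s w := by
  obtain ⟨η, hη⟩ := exists_gt ((insert ξ s).max' (insert_nonempty _ _))
  have hle : ∀ ζ ∈ insert ξ s, ζ < η := fun ζ hζ => (le_max' _ _ hζ).trans_lt hη
  have hξη : ξ < η := hle ξ (mem_insert_self _ _)
  obtain ⟨w, hw⟩ := h η hξη (insert ξ (insert η s))
    (mem_insert_self _ _) (mem_insert_of_mem (mem_insert_self _ _)) <| by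
      simp only [coe_insert, Set.insert_subset_iff, Set.mem_Icc, le_rfl, true_and, and_true]
      exact ⟨hξη.le, hξη.le, fun ζ hζ => ⟨(hs hζ).le, (hle ζ (mem_insert_of_mem hζ)).le⟩⟩
  exact ⟨w, hw.mono ((subset_insert _ _).trans (subset_insert _ _))⟩

theorem exists_min'_max'_of_not_hasWalksBetween (h : ¬HasWalksBetween F ξ η) :
    ∃ (s : Finset ι) (hs : s.Nonempty), s.min' hs = ξ ∧ s.max' hs = η ∧
      ∀ w, ¬IsWalkOn F s w := by
  simp only [HasWalksBetween, not_forall, not_exists] at h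
  obtain ⟨s, hξ, hη, hs, hno⟩ := h
  exact ⟨s, ⟨ξ, hξ⟩, (s.isLeast_min' _).unique ⟨hξ, fun ζ hζ => (hs hζ).1⟩,
    (s.isGreatest_max' _).unique ⟨hη, fun ζ hζ => (hs hζ).2⟩, hno⟩

end Separation

section GreedySparse

variable {I : Type*} [LinearOrder I] [WellFoundedLT I] {β : I → I} {ξ η : I}

def greedySparseSet (β : I → I) : Set I :=
  WellFoundedLT.fix fun ξ mem => ∀ ξ' (h : ξ' < ξ), mem ξ' h → β ξ' ≤ ξ

theorem mem_greedySparseSet :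
    ξ ∈ greedySparseSet β ↔ ∀ ξ' ∈ greedySparseSet β, ξ' < ξ → β ξ' ≤ ξ := by
  change WellFoundedLT.fix (motive := fun _ => Prop) _ ξ ↔ _
  rw [WellFoundedLT.fix_eq]
  exact ⟨fun h ξ' hξ' hlt => h ξ' hlt hξ', fun h ξ' hlt hξ' => h ξ' hξ' hlt⟩

theorem le_of_mem_greedySparseSet (hξ : ξ ∈ greedySparseSet β) (hη : η ∈ greedySparseSet β)
    (hlt : ξ < η) : β ξ ≤ η :=
  mem_greedySparseSet.1 hη ξ hξ hlt

theorem isCofinal_greedySparseSet (β : I → I) : IsCofinal (greedySparseSet β) := by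
  intro γ
  by_contra! hγ
  -- Every `ξ ≥ γ` is excluded by a member `x` with `ξ < β x`; two such witnesses clash.
  have hout : ∀ ξ, γ ≤ ξ → ∃ x ∈ greedySparseSet β, x < ξ ∧ ξ < β x := fun ξ hξ => by
    by_contra! h
    exact (hγ ξ (mem_greedySparseSet.2 fun x hx hxξ => h x hx hxξ)).not_ge hξ
  obtain ⟨x₀, hx₀, -, hγx₀⟩ := hout γ le_rfl
  obtain ⟨x₁, hx₁, -, hx₀x₁⟩ := hout (β x₀) hγx₀.le
  rcases lt_trichotomy x₀ x₁ with h | rfl | h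
  · exact ((le_of_mem_greedySparseSet hx₀ hx₁ h).trans_lt (hγ x₁ hx₁)).not_gt hγx₀
  · exact lt_irrefl _ hx₀x₁
  · exact ((le_of_mem_greedySparseSet hx₁ hx₀ h).trans_lt (hγ x₀ hx₀)).not_gt
      (hγx₀.trans hx₀x₁)

end GreedySparse

theorem Cardinal.exists_strictMono_toType_ord_gt {κ : Cardinal} (hκ : Cardinal.aleph0 ≤ κ)
    (γ : κ.ord.ToType) : ∃ e : κ.ord.ToType → κ.ord.ToType, StrictMono e ∧ ∀ i, γ < e i := by
  have hadd := Ordinal.isPrincipal_add_ord hκ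
  have hone : (1 : Ordinal) < κ.ord :=
    Cardinal.lt_ord.2 (by simpa using one_lt_aleph0.trans_le hκ)
  let shift (i : κ.ord.ToType) : Set.Iio κ.ord :=
    ⟨γ.toOrd + 1 + i.toOrd, hadd (hadd γ.toOrd.2 hone) i.toOrd.2⟩
  refine ⟨fun i => Ordinal.ToType.mk (shift i), fun i j hij => ?_, fun i => ?_⟩
  · refine Ordinal.ToType.mk.lt_iff_lt.2 (Subtype.mk_lt_mk.2 (add_lt_add_right ?_ _))
    exact Ordinal.ToType.mk.symm.lt_iff_lt.2 hij
  · refine Ordinal.ToType.mk.symm_apply_lt.1 (Subtype.mk_lt_mk.2 ?_)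
    exact (Order.lt_add_one_iff.2 le_rfl).trans_le le_self_add

theorem stmt8_general [PartialOrder α] (κ : Cardinal) (hκ : Cardinal.aleph0 < κ)
    (A : Set α) (F : κ.ord.ToType → Set α)
    (hFfin : ∀ ξ, (F ξ).Finite)
    (hFF : ∀ ξ η, ξ ≠ η → Disjoint (F ξ) (F η))
    (hnoinc : ¬ ∃ g : κ.ord.ToType → α, (∀ i, g i ∈ A ∪ ⋃ ξ, F ξ) ∧ StrictMono g)
    (hnodec : ¬ ∃ g : κ.ord.ToType → α, (∀ i, g i ∈ A ∪ ⋃ ξ, F ξ) ∧ StrictAnti g) :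
    ∃ X : Set κ.ord.ToType, (∀ i, ∃ x ∈ X, i ≤ x) ∧
      ∀ ξ ∈ X, ∀ η ∈ X, ξ ≠ η →
        ∃ (s : Finset κ.ord.ToType) (hs : s.Nonempty),
          ({ξ, η} : Set κ.ord.ToType) = {s.min' hs, s.max' hs} ∧
          ¬ ∃ w : κ.ord.ToType → α, IsWalkOn F s w ∧
            ((w (s.min' hs) ∈ F ξ ∧ w (s.max' hs) ∈ F η) ∨
             (w (s.min' hs) ∈ F η ∧ w (s.max' hs) ∈ F ξ)) := by
  have := Cardinal.noMaxOrder hκ.le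
  by_cases hsep : ∀ ξ, ∃ β, ∀ η, β ≤ η → ¬HasWalksBetween F ξ η
  · choose β hβ using hsep
    refine ⟨greedySparseSet β, isCofinal_greedySparseSet β, fun ξ hξ η hη hne => ?_⟩
    rcases hne.lt_or_gt with hlt | hlt
    · obtain ⟨s, hs, hmin, hmax, hno⟩ := exists_min'_max'_of_not_hasWalksBetween
        (hβ ξ η (le_of_mem_greedySparseSet hξ hη hlt))
      exact ⟨s, hs, by rw [hmin, hmax], fun ⟨w, hw, _⟩ => hno w hw⟩
    · obtain ⟨s, hs, hmin, hmax, hno⟩ := exists_min'_max'_of_not_hasWalksBetween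
        (hβ η ξ (le_of_mem_greedySparseSet hη hξ hlt))
      exact ⟨s, hs, by rw [hmin, hmax, Set.pair_comm], fun ⟨w, hw, _⟩ => hno w hw⟩
  · exfalso
    push Not at hsep
    obtain ⟨ξ₀, hξ₀⟩ := hsep
    have hwalks : ∀ η, ξ₀ < η → HasWalksBetween F ξ₀ η := fun η hη =>
      let ⟨_, hηη', h⟩ := hξ₀ η
      h.of_le hη.le hηη'
    obtain ⟨v, hvF, hv⟩ := exists_strictMonoOn_or_strictAntiOn hFfin (fun ξ η => hFF ξ η)
      (exists_isWalkOn_of_forall_hasWalksBetween hwalks)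
    obtain ⟨e, he, hξ₀e⟩ := Cardinal.exists_strictMono_toType_ord_gt hκ.le ξ₀
    have hmem : ∀ i, v (e i) ∈ A ∪ ⋃ ξ, F ξ :=
      fun i => Or.inr (Set.mem_iUnion.2 ⟨_, hvF _ (hξ₀e i)⟩)
    rcases hv with hv | hv
    · exact hnoinc ⟨v ∘ e, hmem, fun i j hij => hv (hξ₀e i) (hξ₀e j) (he hij)⟩
    · exact hnodec ⟨v ∘ e, hmem, fun i j hij => hv (hξ₀e i) (hξ₀e j) (he hij)⟩

/-- Suppose `κ` is an uncountable cardinal, `A` and `F ξ` (for `ξ < κ`) are pairwise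
disjoint, `A` is countable, each `F ξ` is finite, and the partially ordered set
`E = A ∪ ⋃_{ξ<κ} F ξ` has neither `κ`-chains nor `κ*`-chains.  Then there is a cofinal
`X ⊆ κ` such that for any distinct `ξ, η ∈ X` there is a finite `s ⊆ κ` with
`{ξ, η} = {min s, max s}` and no `s`-walk with endpoints in `F ξ` and `F η`. -/
theorem stmt8 [PartialOrder α] (κ : Cardinal) (hκ : Cardinal.aleph0 < κ)
    (A : Set α) (F : κ.ord.ToType → Set α)
    (hA : A.Countable) (hFfin : ∀ ξ, (F ξ).Finite)
    (hAF : ∀ ξ, Disjoint A (F ξ))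
    (hFF : ∀ ξ η, ξ ≠ η → Disjoint (F ξ) (F η))
    (hnoinc : ¬ ∃ g : κ.ord.ToType → α, (∀ i, g i ∈ A ∪ ⋃ ξ, F ξ) ∧ StrictMono g)
    (hnodec : ¬ ∃ g : κ.ord.ToType → α, (∀ i, g i ∈ A ∪ ⋃ ξ, F ξ) ∧ StrictAnti g) :
    ∃ X : Set κ.ord.ToType, (∀ i, ∃ x ∈ X, i ≤ x) ∧
      ∀ ξ ∈ X, ∀ η ∈ X, ξ ≠ η →
        ∃ (s : Finset κ.ord.ToType) (hs : s.Nonempty),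
          ({ξ, η} : Set κ.ord.ToType) = {s.min' hs, s.max' hs} ∧
          ¬ ∃ w : κ.ord.ToType → α, IsWalkOn F s w ∧
            ((w (s.min' hs) ∈ F ξ ∧ w (s.max' hs) ∈ F η) ∨
             (w (s.min' hs) ∈ F η ∧ w (s.max' hs) ∈ F ξ)) :=
  stmt8_general κ hκ A F hFfin hFF hnoinc hnodec
end

section
/- For every partially ordered set (E, ≤_E), the poset ℍ_E has precaliber κ for every uncountable regular cardinal κ: for every family (p_ξ)_{ξ<κ} of conditions in ℍ_E there exists a set S ⊆ κ of cardinality κ such that for every finite subset u of S the conditions p_ξ, for ξ ∈ u, have a common lower bound in ℍ_E. -/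
/-!
Pigeonhole into `ℕ` fixes the length `n` on `κ` many conditions, the Δ-system lemma (for
regular uncountable `κ`) makes their domains pairwise meet in a fixed root `R`, and a second
pigeonhole fixes the values of `f` on `R` below `n`, of which there are only countably many
patterns. Finitely many surviving conditions then agree wherever their domains overlap, so
their union with length `n` is a common extension: the monotonicity clause of `HExt` only
concerns new levels, and there are none.
-/

/-- A condition `(D, n, f)` of the forcing notion `ℍ_E`. -/
structure HCond (E : Type*) where
  D : Finset E
  n : ℕ
  f : E → ℕ → ℕ
  f_zero : ∀ a ∈ D, 0 < n → f a 0 = 0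
  f_lt : ∀ a ∈ D, ∀ j, 1 ≤ j → j < n → f a j < j

/-- `p ≤ q` in `ℍ_E`. -/
def HExt {E : Type*} [PartialOrder E] (p q : HCond E) : Prop :=
  q.D ⊆ p.D ∧ q.n ≤ p.n ∧
  (∀ a ∈ q.D, ∀ j < q.n, p.f a j = q.f a j) ∧
  (∀ a ∈ q.D, ∀ b ∈ q.D, a ≤ b → ∀ j, q.n ≤ j → j < p.n → p.f a j ≤ p.f b j)

open Cardinal Set

universe u

section DeltaSystem

variable {ι : Type u} {κ : Cardinal.{u}}

theorem Cardinal.exists_mk_sep_eq_of_countable {C : Type*} [Countable C] (hκ : ℵ₀ < κ.ord.cof)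
    {A : Set ι} (hA : #A = κ) (g : ι → C) : ∃ c, #{ξ ∈ A | g ξ = c} = κ := by
  obtain ⟨e, he⟩ := exists_injective_nat C
  obtain ⟨m, t, htA, hκt, htm⟩ := infinite_pigeonhole_set (s := A)
    (fun ξ => ULift.up.{u} (e (g ξ))) κ hA.ge (hκ.le.trans (Ordinal.cof_ord_le κ))
    (by simpa using hκ)
  obtain ⟨ξ₀, hξ₀⟩ : t.Nonempty := by
    refine nonempty_coe_sort.1 (mk_ne_zero_iff.1 ?_)
    exact (aleph0_pos.trans (hκ.trans_le (Ordinal.cof_ord_le κ))).trans_le hκt |>.ne'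
  refine ⟨g ξ₀, le_antisymm (hA ▸ mk_le_mk_of_subset (sep_subset _ _)) <|
    hκt.trans (mk_le_mk_of_subset fun ξ hξ => ⟨htA hξ, he ?_⟩)⟩
  exact congrArg ULift.down ((htm hξ).trans (htm hξ₀).symm)

theorem Cardinal.mk_biUnion_finset_lt {α β : Type*} {c : Cardinal} (hc : ℵ₀ ≤ c) (t : Finset β)
    (F : β → Set α) (h : ∀ b ∈ t, #(F b) < c) : #(⋃ b ∈ t, F b) < c := by
  classical
  induction t using Finset.induction_on with
  | empty => simpa using aleph0_pos.trans_le hc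
  | insert b t _ ih =>
    rw [Finset.set_biUnion_insert]
    exact (mk_union_le _ _).trans_lt <| add_lt_of_lt hc (h b (t.mem_insert_self b))
      (ih fun b' hb' => h b' (Finset.mem_insert_of_mem hb'))

variable {α : Type*}

theorem exists_pairwiseDisjoint_of_mk_sep_mem_lt (hκ : ℵ₀ < κ) (hreg : κ.IsRegular) {A : Set ι}
    (hA : #A = κ) (D : ι → Finset α) (hsmall : ∀ a, #{ξ ∈ A | a ∈ D ξ} < κ) :
    ∃ S ⊆ A, #S = κ ∧ S.PairwiseDisjoint D := by
  obtain ⟨m, -, ⟨hmA, hmD⟩, hmax⟩ :=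
    zorn_subset_nonempty {S | S ⊆ A ∧ S.PairwiseDisjoint D} (fun c hc hchain _ =>
      ⟨⋃₀ c, ⟨sUnion_subset fun s hs => (hc hs).1,
        (hchain.pairwiseDisjoint_sUnion D).2 fun s hs => (hc hs).2⟩,
        fun _ => subset_sUnion_of_mem⟩) ∅ ⟨empty_subset A, pairwiseDisjoint_empty⟩
  refine ⟨m, hmA, (hA ▸ mk_le_mk_of_subset hmA).antisymm (not_lt.1 fun hm => ?_), hmD⟩
  have hcover : A ⊆ m ∪ ⋃ η ∈ m, ⋃ a ∈ D η, {ξ ∈ A | a ∈ D ξ} := by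
    intro ξ hξ
    by_cases hξm : ξ ∈ m
    · exact Or.inl hξm
    obtain ⟨η, hη, hmeet⟩ : ∃ η ∈ m, ¬Disjoint (D ξ) (D η) := by
      by_contra! hdisj
      exact hξm (hmax ⟨insert_subset hξ hmA, hmD.insert fun η hη _ => hdisj η hη⟩
        (subset_insert ξ m) (mem_insert ξ m))
    obtain ⟨a, haξ, haη⟩ := Finset.not_disjoint_iff.1 hmeet
    exact Or.inr (mem_biUnion hη (mem_biUnion haη ⟨hξ, haξ⟩))
  have hunion : #(⋃ η ∈ m, ⋃ a ∈ D η, {ξ ∈ A | a ∈ D ξ}) < κ :=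
    (card_biUnion_lt_iff_forall_of_isRegular hreg hm).2 fun η _ =>
      mk_biUnion_finset_lt hκ.le (D η) _ fun a _ => hsmall a
  exact hA.not_lt <| (mk_le_mk_of_subset hcover).trans_lt <|
    (mk_union_le _ _).trans_lt (add_lt_of_lt hκ.le hm hunion)

theorem exists_delta_system_of_card_eq [DecidableEq α] (hκ : ℵ₀ < κ) (hreg : κ.IsRegular)
    (r : ℕ) {A : Set ι} (hA : #A = κ) (D : ι → Finset α) (hr : ∀ ξ ∈ A, (D ξ).card = r) :
    ∃ S ⊆ A, #S = κ ∧ ∃ R, S.Pairwise fun ξ η => D ξ ∩ D η = R := by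
  induction r generalizing A D with
  | zero =>
    refine ⟨A, Subset.rfl, hA, ∅, fun ξ hξ η _ _ => ?_⟩
    simp only [Finset.card_eq_zero.1 (hr ξ hξ), Finset.empty_inter]
  | succ r ih =>
    by_cases hbig : ∃ a, #{ξ ∈ A | a ∈ D ξ} = κ
    · obtain ⟨a, ha⟩ := hbig
      obtain ⟨S, hS, hSκ, R, hR⟩ := ih ha (fun ξ => (D ξ).erase a) fun ξ hξ => by
        rw [Finset.card_erase_of_mem hξ.2, hr ξ hξ.1, Nat.add_sub_cancel]
      refine ⟨S, hS.trans (sep_subset _ _), hSκ, insert a R, fun ξ hξ η hη hne => ?_⟩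
      rw [← hR hξ hη hne, Finset.erase_inter, Finset.inter_erase, Finset.erase_idem,
        Finset.insert_erase (Finset.mem_inter.2 ⟨(hS hξ).2, (hS hη).2⟩)]
    · push Not at hbig
      obtain ⟨S, hS, hSκ, hSD⟩ := exists_pairwiseDisjoint_of_mk_sep_mem_lt hκ hreg hA D
        fun a => (hA ▸ mk_le_mk_of_subset (sep_subset _ _)).lt_of_ne (hbig a)
      exact ⟨S, hS, hSκ, ∅, fun ξ hξ η hη hne =>
        Finset.disjoint_iff_inter_eq_empty.1 (hSD hξ hη hne)⟩

theorem exists_delta_system [DecidableEq α] (hκ : ℵ₀ < κ) (hreg : κ.IsRegular) {A : Set ι}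
    (hA : #A = κ) (D : ι → Finset α) :
    ∃ S ⊆ A, #S = κ ∧ ∃ R, S.Pairwise fun ξ η => D ξ ∩ D η = R := by
  obtain ⟨r, hr⟩ := exists_mk_sep_eq_of_countable (hreg.cof_ord.symm ▸ hκ) hA fun ξ => (D ξ).card
  obtain ⟨S, hS, hSκ, hΔ⟩ := exists_delta_system_of_card_eq hκ hreg r hr D fun _ hξ => hξ.2
  exact ⟨S, hS.trans (sep_subset _ _), hSκ, hΔ⟩

end DeltaSystem

theorem HCond.exists_common_ext {E ι : Type*} [PartialOrder E] (u : Finset ι) (p : ι → HCond E)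
    (n : ℕ) (hn : ∀ ξ ∈ u, (p ξ).n = n)
    (hagree : ∀ ξ ∈ u, ∀ η ∈ u, ∀ a ∈ (p ξ).D, a ∈ (p η).D → ∀ j < n, (p ξ).f a j = (p η).f a j) :
    ∃ q : HCond E, ∀ ξ ∈ u, HExt q (p ξ) := by
  classical
  let F : E → ℕ → ℕ := fun a =>
    if h : ∃ ξ ∈ u, a ∈ (p ξ).D then (p h.choose).f a else 0
  have hF : ∀ ξ ∈ u, ∀ a ∈ (p ξ).D, ∀ j < n, F a j = (p ξ).f a j := by
    intro ξ hξ a ha j hj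
    have h : ∃ ξ ∈ u, a ∈ (p ξ).D := ⟨ξ, hξ, ha⟩
    simp only [F, dif_pos h]
    exact hagree _ h.choose_spec.1 ξ hξ a h.choose_spec.2 ha j hj
  have hmem : ∀ a ∈ u.biUnion fun ξ => (p ξ).D, ∃ ξ ∈ u, a ∈ (p ξ).D := fun a ha =>
    Finset.mem_biUnion.1 ha
  refine ⟨⟨u.biUnion fun ξ => (p ξ).D, n, F, fun a ha hn0 => ?_, fun a ha j hj1 hjn => ?_⟩,
    fun ξ hξ => ⟨Finset.subset_biUnion_of_mem (fun ξ => (p ξ).D) hξ, (hn ξ hξ).le,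
      fun a ha j hj => hF ξ hξ a ha j (hn ξ hξ ▸ hj),
      fun a _ b _ _ j hj hjn => absurd (hn ξ hξ ▸ hj) (not_le.2 hjn)⟩⟩
  · obtain ⟨ξ, hξ, haξ⟩ := hmem a ha
    rw [hF ξ hξ a haξ 0 hn0]
    exact (p ξ).f_zero a haξ (hn ξ hξ ▸ hn0)
  · obtain ⟨ξ, hξ, haξ⟩ := hmem a ha
    rw [hF ξ hξ a haξ j hjn]
    exact (p ξ).f_lt a haξ j hj1 (hn ξ hξ ▸ hjn)

/-- For every partially ordered set `E`, the poset `ℍ_E` has precaliber `κ` for every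
uncountable regular cardinal `κ`: any family of `κ` conditions has a subfamily of
cardinality `κ` every finite subset of which has a common lower bound. -/
theorem stmt10 {E : Type*} [PartialOrder E] (κ : Cardinal)
    (hκ : Cardinal.aleph0 < κ) (hreg : κ.IsRegular)
    (p : κ.ord.ToType → HCond E) :
    ∃ S : Set κ.ord.ToType, Cardinal.mk S = κ ∧
      ∀ u : Finset κ.ord.ToType, ↑u ⊆ S →
        ∃ q : HCond E, ∀ ξ ∈ u, HExt q (p ξ) := by
  classical
  have hcof : ℵ₀ < κ.ord.cof := hreg.cof_ord.symm ▸ hκ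
  obtain ⟨n, hn⟩ := exists_mk_sep_eq_of_countable hcof (A := univ) (by simp) fun ξ => (p ξ).n
  obtain ⟨S₀, hS₀, hS₀κ, R, hΔ⟩ := exists_delta_system hκ hreg hn fun ξ => (p ξ).D
  obtain ⟨c, hS⟩ := exists_mk_sep_eq_of_countable hcof hS₀κ
    fun ξ (a : R) (j : Fin n) => (p ξ).f a j
  refine ⟨_, hS, fun u hu => HCond.exists_common_ext u p n (fun ξ hξ => (hS₀ (hu hξ).1).2) ?_⟩
  intro ξ hξ η hη a haξ haη j hj
  rcases eq_or_ne ξ η with rfl | hne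
  · rfl
  have haR : a ∈ R := hΔ (hu hξ).1 (hu hη).1 hne ▸ Finset.mem_inter.2 ⟨haξ, haη⟩
  exact congrFun (congrFun ((hu hξ).2.trans (hu hη).2.symm) ⟨a, haR⟩) ⟨j, hj⟩
end

section
/- For every partially ordered set (E, ≤_E), all a, b ∈ E with b ≰_E a, and every n ∈ ℕ, the set ℰ(ℍ_E, n, a, b) := {p ∈ ℍ_E : a ∈ D_p, b ∈ D_p, and there exists k with n ≤ k < n_p and f_p(a)(k) < f_p(b)(k)} is dense in ℍ_E: every condition in ℍ_E has an extension in ℰ(ℍ_E, n, a, b). -/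
/-!
Extend `q` to length `k + 1`, where `k ≥ max n 2` lies beyond the old length, by letting the
functions be `0` on the new levels, except on the upper set `Ici b`, where they are `j ↦ j - 1`.
Since `Ici b` is an upper set, the new values are monotone in the order of `E`, so this is an
extension; at level `k` it separates `a ∉ Ici b` (value `0`) from `b` (value `k - 1 > 0`).
-/

namespace HCond

variable {E : Type*}

open Classical in
noncomputable def extendWithUpperSet (q : HCond E) (D : Finset E) (U : Set E) (N : ℕ) :
    HCond E where
  D := q.D ∪ D
  n := N
  f c j := if j < q.n then (if c ∈ q.D then q.f c j else 0) else if c ∈ U then j - 1 else 0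
  f_zero c _ _ := by
    split_ifs with h₀ hc <;> first | exact q.f_zero c hc h₀ | rfl
  f_lt c _ j hj _ := by
    split_ifs with hjq hc <;> first | exact q.f_lt c hc j hj hjq | omega

variable (q : HCond E) (D : Finset E) (N : ℕ)

open Classical in
theorem extendWithUpperSet_f_of_le (U : Set E) {c : E} {j : ℕ} (hj : q.n ≤ j) :
    (q.extendWithUpperSet D U N).f c j = if c ∈ U then j - 1 else 0 := by
  simp [extendWithUpperSet, Nat.not_lt.mpr hj]

theorem extendWithUpperSet_hExt [PartialOrder E] {U : Set E} (hU : IsUpperSet U)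
    (hN : q.n ≤ N) : HExt (q.extendWithUpperSet D U N) q := by
  classical
  refine ⟨Finset.subset_union_left, hN, fun c hc j hj => by simp [extendWithUpperSet, hj, hc],
    fun c _ d _ hcd j hj _ => ?_⟩
  simp only [extendWithUpperSet_f_of_le q D N U hj]
  by_cases hcU : c ∈ U
  · simp [hcU, hU hcd hcU]
  · simp [hcU]

end HCond

/-- For all `a, b ∈ E` with `b ≰ a` and every `n ∈ ℕ`, the set
`ℰ(ℍ_E, n, a, b) = {p : a, b ∈ D_p and ∃ k, n ≤ k < n_p, f_p(a)(k) < f_p(b)(k)}`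
is dense in `ℍ_E`. -/
theorem stmt12 {E : Type*} [PartialOrder E] (a b : E) (hba : ¬ b ≤ a) (n : ℕ)
    (q : HCond E) :
    ∃ p : HCond E, HExt p q ∧ a ∈ p.D ∧ b ∈ p.D ∧
      ∃ k, n ≤ k ∧ k < p.n ∧ p.f a k < p.f b k := by
  classical
  set k := max (max q.n n) 2
  have hqk : q.n ≤ k := le_max_of_le_left (le_max_left _ _)
  have hnk : n ≤ k := le_max_of_le_left (le_max_right _ _)
  have hk : 2 ≤ k := le_max_right _ _
  refine ⟨q.extendWithUpperSet {a, b} (Set.Ici b) (k + 1),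
    q.extendWithUpperSet_hExt _ _ (isUpperSet_Ici b) (by omega),
    by simp [HCond.extendWithUpperSet], by simp [HCond.extendWithUpperSet],
    k, hnk, k.lt_succ_self, ?_⟩
  simp only [HCond.extendWithUpperSet_f_of_le _ _ _ _ hqk, Set.mem_Ici, hba, le_refl, if_true,
    if_false]
  omega
end

section
/- Let (E, ≤_E) be a partially ordered set and let G be a filter on ℍ_E (a nonempty, upward closed, downward directed set of conditions) such that G intersects D(ℍ_E, n, a) for every n ∈ ℕ and a ∈ E, and G intersects ℰ(ℍ_E, n, a, b) for every n ∈ ℕ and all a, b ∈ E with b ≰_E a. Then setting Υ_G(a)(j) := f_p(a)(j) for any p ∈ G with a ∈ D_p and j < n_p gives a well-defined function Υ_G : E → P, and for all a, b ∈ E one has a ≤_E b if and only if Υ_G(a) ≤* Υ_G(b). -/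
open Filter

/-! Any two conditions of a filter have a common extension, so they agree wherever both are
defined, and `Υ_G` is well defined. An extension of a condition `r` containing `a ≤ b` keeps
`f a ≤ f b` from `r.n` on, while the conditions of `ℰ` met by `G` give arbitrarily late `k`
with `Υ_G(b)(k) < Υ_G(a)(k)` when `a ≰ b`. -/

namespace HCond

variable {E : Type*} [PartialOrder E] {G : Set (HCond E)}

/-- The generic function `Υ_G`: the value `f_p(a)(j)` of some `p ∈ G` that decides it
(and `0` if no condition in `G` does). -/
noncomputable def generic (G : Set (HCond E)) (a : E) (j : ℕ) : ℕ :=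
  open Classical in
  if h : ∃ p ∈ G, j < p.n ∧ a ∈ p.D then h.choose.f a j else 0

section Directed

variable (hdir : ∀ p ∈ G, ∀ q ∈ G, ∃ r ∈ G, HExt r p ∧ HExt r q)
include hdir

theorem f_eq_of_directed {p q : HCond E} (hp : p ∈ G) (hq : q ∈ G) {a : E}
    (hap : a ∈ p.D) (haq : a ∈ q.D) {j : ℕ} (hjp : j < p.n) (hjq : j < q.n) :
    p.f a j = q.f a j := by
  obtain ⟨r, -, ⟨-, -, hrp, -⟩, ⟨-, -, hrq, -⟩⟩ := hdir p hp q hq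
  rw [← hrp a hap j hjp, ← hrq a haq j hjq]

theorem generic_eq {p : HCond E} (hp : p ∈ G) {a : E} (ha : a ∈ p.D) {j : ℕ} (hj : j < p.n) :
    generic G a j = p.f a j := by
  have h : ∃ p ∈ G, j < p.n ∧ a ∈ p.D := ⟨p, hp, hj, ha⟩
  obtain ⟨hq, hjq, haq⟩ := h.choose_spec
  rw [generic, dif_pos h]
  exact f_eq_of_directed hdir hq hp haq ha hjq hj

theorem generic_zero_and_lt_self (hD : ∀ (n : ℕ) (a : E), ∃ p ∈ G, n ≤ p.n ∧ a ∈ p.D) (a : E) :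
    generic G a 0 = 0 ∧ ∀ k, 1 ≤ k → generic G a k < k := by
  refine ⟨?_, fun k hk => ?_⟩
  · obtain ⟨p, hp, hn, ha⟩ := hD 1 a
    rw [generic_eq hdir hp ha hn]
    exact p.f_zero a ha hn
  · obtain ⟨p, hp, hn, ha⟩ := hD (k + 1) a
    rw [generic_eq hdir hp ha hn]
    exact p.f_lt a ha k hk hn

theorem eventually_generic_le_of_le (hD : ∀ (n : ℕ) (a : E), ∃ p ∈ G, n ≤ p.n ∧ a ∈ p.D)
    {a b : E} (hab : a ≤ b) : ∀ᶠ j in atTop, generic G a j ≤ generic G b j := by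
  obtain ⟨p, hp, -, hap⟩ := hD 0 a
  obtain ⟨q, hq, -, hbq⟩ := hD 0 b
  obtain ⟨r, hr, ⟨hpr, -⟩, ⟨hqr, -⟩⟩ := hdir p hp q hq
  filter_upwards [eventually_ge_atTop r.n] with j hj
  obtain ⟨s, hs, hsn, -⟩ := hD (j + 1) a
  obtain ⟨t, ht, ⟨hrt, -, -, hmono⟩, ⟨-, hst, -⟩⟩ := hdir r hr s hs
  have hjt : j < t.n := by omega
  rw [generic_eq hdir ht (hrt (hpr hap)) hjt, generic_eq hdir ht (hrt (hqr hbq)) hjt]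
  exact hmono a (hpr hap) b (hqr hbq) hab j hj hjt

theorem le_of_eventually_generic_le
    (hE : ∀ (n : ℕ) (a b : E), ¬ b ≤ a → ∃ p ∈ G, a ∈ p.D ∧ b ∈ p.D ∧
      ∃ k, n ≤ k ∧ k < p.n ∧ p.f a k < p.f b k)
    {a b : E} (h : ∀ᶠ j in atTop, generic G a j ≤ generic G b j) : a ≤ b := by
  by_contra hab
  obtain ⟨N, hN⟩ := eventually_atTop.mp h
  obtain ⟨p, hp, hbp, hap, k, hk, hkp, hlt⟩ := hE N b a hab
  have hle := hN k hk
  rw [generic_eq hdir hp hap hkp, generic_eq hdir hp hbp hkp] at hle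
  omega

end Directed

end HCond

theorem stmt13_general {E : Type*} [PartialOrder E] (G : Set (HCond E))
    (hdir : ∀ p ∈ G, ∀ q ∈ G, ∃ r ∈ G, HExt r p ∧ HExt r q)
    (hD : ∀ (n : ℕ) (a : E), ∃ p ∈ G, n ≤ p.n ∧ a ∈ p.D)
    (hE : ∀ (n : ℕ) (a b : E), ¬ b ≤ a → ∃ p ∈ G, a ∈ p.D ∧ b ∈ p.D ∧
      ∃ k, n ≤ k ∧ k < p.n ∧ p.f a k < p.f b k) :
    ∃ Υ : E → ℕ → ℕ,
      (∀ p ∈ G, ∀ a ∈ p.D, ∀ j < p.n, Υ a j = p.f a j) ∧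
      (∀ a : E, Υ a 0 = 0 ∧ ∀ k, 1 ≤ k → Υ a k < k) ∧
      (∀ a b : E, a ≤ b ↔ ∀ᶠ j in atTop, Υ a j ≤ Υ b j) :=
  ⟨HCond.generic G, fun _ hp _ ha _ hj => HCond.generic_eq hdir hp ha hj,
    HCond.generic_zero_and_lt_self hdir hD, fun _ _ =>
      ⟨HCond.eventually_generic_le_of_le hdir hD, HCond.le_of_eventually_generic_le hdir hE⟩⟩

/-- If `G` is a filter on `ℍ_E` meeting all the dense sets `D(ℍ_E, n, a)` and
`ℰ(ℍ_E, n, a, b)`, then `Υ_G(a)(j) := f_p(a)(j)` (for any `p ∈ G` with `a ∈ D_p`,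
`j < n_p`) is a well-defined map from `E` to `P`, and `a ≤_E b ↔ Υ_G(a) ≤* Υ_G(b)`. -/
theorem stmt13 {E : Type*} [PartialOrder E] (G : Set (HCond E))
    (hne : G.Nonempty)
    (hup : ∀ p ∈ G, ∀ q : HCond E, HExt p q → q ∈ G)
    (hdir : ∀ p ∈ G, ∀ q ∈ G, ∃ r ∈ G, HExt r p ∧ HExt r q)
    (hD : ∀ (n : ℕ) (a : E), ∃ p ∈ G, n ≤ p.n ∧ a ∈ p.D)
    (hE : ∀ (n : ℕ) (a b : E), ¬ b ≤ a → ∃ p ∈ G, a ∈ p.D ∧ b ∈ p.D ∧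
      ∃ k, n ≤ k ∧ k < p.n ∧ p.f a k < p.f b k) :
    ∃ Υ : E → ℕ → ℕ,
      (∀ p ∈ G, ∀ a ∈ p.D, ∀ j < p.n, Υ a j = p.f a j) ∧
      (∀ a : E, Υ a 0 = 0 ∧ ∀ k, 1 ≤ k → Υ a k < k) ∧
      (∀ a b : E, a ≤ b ↔ ∀ᶠ j in atTop, Υ a j ≤ Υ b j) :=
  stmt13_general G hdir hD hE
end

section
/- Let E be a subposet of a partially ordered set E′ (so the order on E is the restriction of the order on E′), and identify ℍ_E with a subordering of ℍ_{E′}. Define π_E : ℍ_{E′} → ℍ_E by π_E(p) := (D_p ∩ E, n_p, f_p restricted to D_p ∩ E). Then π_E is a reduction witnessing that ℍ_E is a regular subordering of ℍ_{E′}: for every p ∈ ℍ_{E′} one has p ≤ π_E(p), and every q ∈ ℍ_E with q ≤ π_E(p) is compatible with p in ℍ_{E′} (i.e., p and q have a common lower bound in ℍ_{E′}). -/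
open scoped Classical in
/-- The reduction `π_E : ℍ_{E'} → ℍ_E` given by `π_E(p) = (D_p ∩ E, n_p, f_p ↾ (D_p ∩ E))`,
where `E` is a subposet of `E'` and conditions of `ℍ_E` are identified with the conditions
of `ℍ_{E'}` whose domain is included in `E`. -/
noncomputable def piE {E' : Type*} (E : Set E') (p : HCond E') : HCond E' where
  D := p.D.filter fun a => a ∈ E
  n := p.n
  f := p.f
  f_zero := fun a ha h0 => p.f_zero a (Finset.mem_filter.mp ha).1 h0
  f_lt := fun a ha j h1 hj => p.f_lt a (Finset.mem_filter.mp ha).1 j h1 hj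

namespace HCond

variable {E : Type*}

theorem hExt_of_n_eq [PartialOrder E] {r q : HCond E} (hD : q.D ⊆ r.D) (hn : r.n = q.n)
    (hf : ∀ a ∈ q.D, ∀ j < q.n, r.f a j = q.f a j) : HExt r q :=
  ⟨hD, hn.ge, hf, fun _ _ _ _ _ _ hqj hrj => absurd (hn ▸ hrj) (not_lt.mpr hqj)⟩

theorem hExt_piE [PartialOrder E] (S : Set E) (p : HCond E) : HExt p (piE S p) := by
  classical
  exact hExt_of_n_eq (fun _ ha => (Finset.mem_filter.mp ha).1) rfl fun _ _ _ _ => rfl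

theorem coe_piE_D_subset (S : Set E) (p : HCond E) : ((piE S p).D : Set E) ⊆ S := by
  classical
  exact fun _ ha => (Finset.mem_filter.mp ha).2

theorem mem_piE_D {S : Set E} {p q : HCond E} (hq : (q.D : Set E) ⊆ S) {a : E}
    (hap : a ∈ p.D) (haq : a ∈ q.D) : a ∈ (piE S p).D := by
  classical
  exact Finset.mem_filter.mpr ⟨hap, hq haq⟩

variable [PartialOrder E]

open scoped Classical in
noncomputable def amalgam (p q : HCond E) : HCond E where
  D := q.D ∪ p.D
  n := q.n
  f a j :=
    if a ∈ q.D then q.f a j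
    else if j < p.n then p.f a j
    else ((p.D ∩ q.D).filter (· ≤ a)).sup fun c => q.f c j
  f_zero a ha hq0 := by
    split_ifs with haq hp0
    · exact q.f_zero a haq hq0
    · exact p.f_zero a ((Finset.mem_union.mp ha).resolve_left haq) hp0
    · refine Nat.eq_zero_of_le_zero (Finset.sup_le fun c hc => ?_)
      rw [q.f_zero c (Finset.mem_inter.mp (Finset.mem_filter.mp hc).1).2 hq0]
  f_lt a ha j hj1 hjq := by
    split_ifs with haq hjp
    · exact q.f_lt a haq j hj1 hjq
    · exact p.f_lt a ((Finset.mem_union.mp ha).resolve_left haq) j hj1 hjp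
    · refine (Finset.sup_lt_iff (show 0 < j by omega)).mpr fun c hc => ?_
      exact q.f_lt c (Finset.mem_inter.mp (Finset.mem_filter.mp hc).1).2 j hj1 hjq

theorem hExt_amalgam_left (p q : HCond E) : HExt (amalgam p q) q := by
  classical
  exact hExt_of_n_eq Finset.subset_union_left rfl fun a ha j _ => by simp [amalgam, ha]

theorem hExt_amalgam_right {p q : HCond E} (hn : p.n ≤ q.n)
    (hagree : ∀ a ∈ p.D, a ∈ q.D → ∀ j < p.n, q.f a j = p.f a j)
    (hmono : ∀ a ∈ p.D, a ∈ q.D → ∀ b ∈ p.D, b ∈ q.D → a ≤ b →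
      ∀ j, p.n ≤ j → j < q.n → q.f a j ≤ q.f b j) :
    HExt (amalgam p q) p := by
  classical
  refine ⟨Finset.subset_union_right, hn, fun a ha j hj => ?_, fun a ha b hb hab j hpj hjq => ?_⟩
  · by_cases haq : a ∈ q.D
    · simp only [amalgam, if_pos haq]
      exact hagree a ha haq j hj
    · simp [amalgam, haq, hj]
  · have hj : ¬ j < p.n := not_lt.mpr hpj
    simp only [amalgam, hj, if_false]
    split_ifs with haq hbq hbq
    · exact hmono a ha haq b hb hbq hab j hpj hjq
    · exact Finset.le_sup (f := fun c => q.f c j)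
        (Finset.mem_filter.mpr ⟨Finset.mem_inter.mpr ⟨ha, haq⟩, hab⟩)
    · refine Finset.sup_le fun c hc => ?_
      obtain ⟨hc, hca⟩ := Finset.mem_filter.mp hc
      obtain ⟨hcp, hcq⟩ := Finset.mem_inter.mp hc
      exact hmono c hcp hcq b hb hbq (hca.trans hab) j hpj hjq
    · refine Finset.sup_mono fun c hc => ?_
      obtain ⟨hc, hca⟩ := Finset.mem_filter.mp hc
      exact Finset.mem_filter.mpr ⟨hc, hca.trans hab⟩

theorem exists_hExt_of_hExt_piE {S : Set E} (p : HCond E) {q : HCond E}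
    (hqS : (q.D : Set E) ⊆ S) (hq : HExt q (piE S p)) :
    ∃ r : HCond E, HExt r q ∧ HExt r p := by
  obtain ⟨-, hn, hagree, hmono⟩ := hq
  exact ⟨amalgam p q, hExt_amalgam_left p q, hExt_amalgam_right hn
    (fun a hap haq => hagree a (mem_piE_D hqS hap haq))
    (fun a hap haq b hbp hbq => hmono a (mem_piE_D hqS hap haq) b (mem_piE_D hqS hbp hbq))⟩

end HCond

/-- `π_E` witnesses that `ℍ_E` is a regular subordering of `ℍ_{E'}`: `π_E(p)` is a
condition of `ℍ_E`, `p` extends `π_E(p)`, and every condition `q` of `ℍ_E` extending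
`π_E(p)` is compatible with `p` in `ℍ_{E'}`. -/
theorem stmt14 {E' : Type*} [PartialOrder E'] (E : Set E') (p : HCond E') :
    ((piE E p).D : Set E') ⊆ E ∧
    HExt p (piE E p) ∧
    ∀ q : HCond E', (q.D : Set E') ⊆ E → HExt q (piE E p) →
      ∃ r : HCond E', HExt r q ∧ HExt r p :=
  ⟨HCond.coe_piE_D_subset E p, HCond.hExt_piE E p,
    fun _ hqE hq => HCond.exists_hExt_of_hExt_piE p hqE hq⟩
end

section
/- Let κ be a cardinal, let (E, ≤) be a partially ordered set, and let F(ζ), for ζ < κ, be pairwise disjoint finite nonempty subsets of E. Let 𝒰 be an ultrafilter on the set S of finite subsets of κ such that {t ∈ S : s ⊆ t} ∈ 𝒰 for every s ∈ S. Suppose that for every s ∈ S we are given elements x(s, ζ) ∈ F(ζ) for ζ ∈ s such that the family (x(s, ζ))_{ζ∈s} is monotone along s: either x(s, ζ) ≤ x(s, ζ′) whenever ζ ≤ ζ′ are in s, or x(s, ζ) ≥ x(s, ζ′) whenever ζ ≤ ζ′ are in s. Then for every ζ < κ there is a unique y(ζ) ∈ F(ζ) with {s ∈ S : ζ ∈ s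 and x(s, ζ) = y(ζ)} ∈ 𝒰, and the family (y(ζ))_{ζ<κ} is either a κ-chain or a κ*-chain in (E, ≤). -/
/-! Since `F ζ` is finite and `ζ ∈ s` for `𝒰`-almost every `s`, the ultrafilter picks out a single
value `y ζ` of `x s ζ`; two such values would give disjoint sets in `𝒰`. The ultrafilter also
decides whether `x s` is monotone or antitone on `s` for almost every `s`; for `ζ < η` some `s` in
all three sets compares `y ζ = x s ζ` with `y η = x s η` accordingly, and disjointness of the `F ζ`
makes `y` injective, so the comparison is strict. -/

open Function Filter

theorem injective_of_pairwise_disjoint_of_mem {ι α : Type*} {F : ι → Set α}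
    (hF : Pairwise (Disjoint on F)) {y : ι → α} (hy : ∀ i, y i ∈ F i) : Injective y :=
  fun i j hij => by_contra fun hne => Set.disjoint_left.mp (hF hne) (hy i) (hij ▸ hy j)

section EventualMonotonicity

variable {ι α : Type*} [Preorder ι] [Preorder α] {l : Filter (Finset ι)} [l.NeBot]
  {x : Finset ι → ι → α} {y : ι → α}

theorem monotone_of_eventually_monotoneOn (hy : ∀ i, ∀ᶠ s in l, i ∈ s ∧ x s i = y i)
    (hx : ∀ᶠ s in l, MonotoneOn (x s) s) : Monotone y := by
  intro i j hij
  obtain ⟨s, ⟨hi, hxi⟩, ⟨hj, hxj⟩, hs⟩ := ((hy i).and ((hy j).and hx)).exists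
  exact hxi ▸ hxj ▸ hs hi hj hij

theorem antitone_of_eventually_antitoneOn (hy : ∀ i, ∀ᶠ s in l, i ∈ s ∧ x s i = y i)
    (hx : ∀ᶠ s in l, AntitoneOn (x s) s) : Antitone y :=
  monotone_of_eventually_monotoneOn (α := αᵒᵈ) hy hx

end EventualMonotonicity

theorem stmt19_general {α : Type*} [PartialOrder α] (κ : Cardinal)
    (F : κ.ord.ToType → Set α)
    (hFfin : ∀ ζ, (F ζ).Finite)
    (hFF : ∀ ζ η, ζ ≠ η → Disjoint (F ζ) (F η))
    (𝒰 : Ultrafilter (Finset κ.ord.ToType))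
    (h𝒰 : ∀ s : Finset κ.ord.ToType, {t : Finset κ.ord.ToType | s ⊆ t} ∈ 𝒰)
    (x : Finset κ.ord.ToType → κ.ord.ToType → α)
    (hx_mem : ∀ s, ∀ ζ ∈ s, x s ζ ∈ F ζ)
    (hx_mono : ∀ s : Finset κ.ord.ToType,
      (∀ ζ ∈ s, ∀ ζ' ∈ s, ζ ≤ ζ' → x s ζ ≤ x s ζ') ∨
      (∀ ζ ∈ s, ∀ ζ' ∈ s, ζ ≤ ζ' → x s ζ' ≤ x s ζ)) :
    ∃ y : κ.ord.ToType → α,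
      (∀ ζ, y ζ ∈ F ζ ∧ {s : Finset κ.ord.ToType | ζ ∈ s ∧ x s ζ = y ζ} ∈ 𝒰 ∧
        ∀ z ∈ F ζ, {s : Finset κ.ord.ToType | ζ ∈ s ∧ x s ζ = z} ∈ 𝒰 → z = y ζ) ∧
      (StrictMono y ∨ StrictAnti y) := by
  have hmem (ζ) : ∀ᶠ s in (𝒰 : Filter (Finset _)), ζ ∈ s :=
    mem_of_superset (h𝒰 {ζ}) fun _ hs => hs (Finset.mem_singleton_self ζ)
  have hlimit (ζ) : ∃ z ∈ F ζ, ∀ᶠ s in (𝒰 : Filter (Finset _)), ζ ∈ s ∧ x s ζ = z :=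
    (Ultrafilter.eventually_exists_mem_iff (hFfin ζ)).1 <|
      (hmem ζ).mono fun s hs => ⟨x s ζ, hx_mem s ζ hs, hs, rfl⟩
  choose y hyF hy using hlimit
  have hunique (ζ) (z) (hz : ∀ᶠ s in (𝒰 : Filter (Finset _)), ζ ∈ s ∧ x s ζ = z) : z = y ζ := by
    obtain ⟨s, ⟨_, rfl⟩, _, hs⟩ := (hz.and (hy ζ)).exists
    exact hs
  have hinj : Injective y := injective_of_pairwise_disjoint_of_mem (fun _ _ => hFF _ _) hyF
  refine ⟨y, fun ζ => ⟨hyF ζ, hy ζ, fun z _ => hunique ζ z⟩, ?_⟩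
  rcases Ultrafilter.eventually_or.1 (Eventually.of_forall hx_mono) with hup | hdown
  · exact .inl ((monotone_of_eventually_monotoneOn hy hup).strictMono_of_injective hinj)
  · exact .inr ((antitone_of_eventually_antitoneOn hy hdown).strictAnti_of_injective hinj)

/-- Let `F ζ`, for `ζ < κ`, be pairwise disjoint finite nonempty subsets of a poset `E`,
and let `𝒰` be an ultrafilter on the finite subsets of `κ` containing every set
`{t : s ⊆ t}`.  If for each finite `s ⊆ κ` we are given `x s ζ ∈ F ζ` (for `ζ ∈ s`)
forming a monotone family along `s`, then for each `ζ` there is a unique `y ζ ∈ F ζ`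
with `{s : ζ ∈ s and x s ζ = y ζ} ∈ 𝒰`, and `(y ζ)_{ζ<κ}` is a `κ`-chain or a
`κ*`-chain. -/
theorem stmt19 {α : Type*} [PartialOrder α] (κ : Cardinal)
    (F : κ.ord.ToType → Set α)
    (hFfin : ∀ ζ, (F ζ).Finite) (hFne : ∀ ζ, (F ζ).Nonempty)
    (hFF : ∀ ζ η, ζ ≠ η → Disjoint (F ζ) (F η))
    (𝒰 : Ultrafilter (Finset κ.ord.ToType))
    (h𝒰 : ∀ s : Finset κ.ord.ToType, {t : Finset κ.ord.ToType | s ⊆ t} ∈ 𝒰)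
    (x : Finset κ.ord.ToType → κ.ord.ToType → α)
    (hx_mem : ∀ s, ∀ ζ ∈ s, x s ζ ∈ F ζ)
    (hx_mono : ∀ s : Finset κ.ord.ToType,
      (∀ ζ ∈ s, ∀ ζ' ∈ s, ζ ≤ ζ' → x s ζ ≤ x s ζ') ∨
      (∀ ζ ∈ s, ∀ ζ' ∈ s, ζ ≤ ζ' → x s ζ' ≤ x s ζ)) :
    ∃ y : κ.ord.ToType → α,
      (∀ ζ, y ζ ∈ F ζ ∧ {s : Finset κ.ord.ToType | ζ ∈ s ∧ x s ζ = y ζ} ∈ 𝒰 ∧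
        ∀ z ∈ F ζ, {s : Finset κ.ord.ToType | ζ ∈ s ∧ x s ζ = z} ∈ 𝒰 → z = y ζ) ∧
      (StrictMono y ∨ StrictAnti y) :=
  stmt19_general κ F hFfin hFF 𝒰 h𝒰 x hx_mem hx_mono
end
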